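/- arXiv:0908.4534 — 10 statements merged into one kernel-verified Lean document; each statement's English description precedes it below -/
import Mathlib

section
/- If X is a generalized eigenvector of the random unitary operation Φ corresponding to the eigenvalue λ, i.e. (Φ − λ·id)^n(X) = 0 for some natural number n ≥ 1, then either λ = 1 or Tr(X) = 0. -/
open Matrix BigOperators

theorem stmt_2 {d m : ℕ} (hd : 1 ≤ d)
    (U : Fin m → Matrix (Fin d) (Fin d) ℂ)
    (hU : ∀ i, U i ∈ Matrix.unitaryGroup (Fin d) ℂ)
    (p : Fin m → ℝ) (hp : ∀ i, 0 < p i) (hpsum : ∑ i, p i = 1)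
    (Φ : Matrix (Fin d) (Fin d) ℂ → Matrix (Fin d) (Fin d) ℂ)
    (hΦ : ∀ ρ, Φ ρ = ∑ i, (p i : ℂ) • (U i * ρ * (U i)ᴴ))
    (lam : ℂ) (X : Matrix (Fin d) (Fin d) ℂ)
    (n : ℕ) (hn : 1 ≤ n)
    (hgen : (fun Y => Φ Y - lam • Y)^[n] X = 0) :
    lam = 1 ∨ X.trace = 0 := by
  have htr : ∀ ρ : Matrix (Fin d) (Fin d) ℂ, (Φ ρ).trace = ρ.trace := by
    intro ρ
    rw [hΦ, trace_sum]
    have : ∀ i, ((p i : ℂ) • (U i * ρ * (U i)ᴴ)).trace = (p i : ℂ) * ρ.trace := by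
      intro i
      rw [trace_smul, trace_mul_cycle]
      have h1 : (U i)ᴴ * U i = 1 := (mem_unitaryGroup_iff'.mp (hU i))
      rw [h1, Matrix.one_mul, smul_eq_mul]
    simp_rw [this, ← Finset.sum_mul, ← Complex.ofReal_sum, hpsum]
    simp
  have key : ∀ k : ℕ, ∀ Y : Matrix (Fin d) (Fin d) ℂ,
      ((fun Y => Φ Y - lam • Y)^[k] Y).trace = (1 - lam)^k * Y.trace := by
    intro k
    induction k with
    | zero => intro Y; simp
    | succ k ih =>
      intro Y
      rw [Function.iterate_succ_apply, ih, trace_sub, trace_smul, htr, pow_succ, smul_eq_mul]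
      ring
  have h0 := key n X
  rw [hgen] at h0
  simp only [trace_zero] at h0
  rcases mul_eq_zero.mp h0.symm with h | h
  · left
    have := pow_eq_zero_iff (by omega : n ≠ 0) |>.mp h
    linear_combination -this
  · right; exact h
end

section
/- For every eigenvalue λ of the random unitary operation Φ with |λ| = 1, the eigenspace Ker(Φ − λ·id) intersects the range Ran(Φ − λ·id) trivially: Ker(Φ − λ·id) ∩ Ran(Φ − λ·id) = {0}. -/
/-!
Each conjugation `ρ ↦ U ρ Uᴴ` by a unitary is an isometry for the operator norm, so the convex
combination `Φ` is a contraction. If `X = (Φ - λ) Y` and `(Φ - λ) X = 0`, then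
`Φⁿ⁺¹ Y = λⁿ⁺¹ Y + (n + 1) λⁿ X`; for `|λ| = 1` the left side stays bounded by `‖Y‖` while the
second term grows linearly unless `X = 0`.
-/

open Matrix

open scoped Matrix.Norms.L2Operator

section RandomUnitaryChannel

variable {ι n 𝕜 : Type*} [Fintype ι] [Fintype n] [DecidableEq n] [RCLike 𝕜]

def randomUnitaryChannel (p : ι → ℝ) (U : ι → Matrix n n 𝕜) :
    Matrix n n 𝕜 →ₗ[𝕜] Matrix n n 𝕜 :=
  ∑ i, (p i : 𝕜) • (LinearMap.mulLeft 𝕜 (U i) ∘ₗ LinearMap.mulRight 𝕜 (U i)ᴴ)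

theorem randomUnitaryChannel_apply (p : ι → ℝ) (U : ι → Matrix n n 𝕜) (ρ : Matrix n n 𝕜) :
    randomUnitaryChannel p U ρ = ∑ i, (p i : 𝕜) • (U i * ρ * (U i)ᴴ) := by
  simp [randomUnitaryChannel, Matrix.mul_assoc]

theorem norm_randomUnitaryChannel_apply_le {p : ι → ℝ} {U : ι → Matrix n n 𝕜}
    (hU : ∀ i, U i ∈ unitaryGroup n 𝕜) (hp : ∀ i, 0 ≤ p i) (hpsum : ∑ i, p i = 1)
    (ρ : Matrix n n 𝕜) : ‖randomUnitaryChannel p U ρ‖ ≤ ‖ρ‖ := by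
  have hconj (i : ι) : ‖U i * ρ * (U i)ᴴ‖ = ‖ρ‖ := by
    rw [← star_eq_conjTranspose, CStarRing.norm_mul_mem_unitary _ (Unitary.star_mem (hU i)),
      CStarRing.norm_mem_unitary_mul _ (hU i)]
  calc ‖randomUnitaryChannel p U ρ‖
      ≤ ∑ i, ‖(p i : 𝕜) • (U i * ρ * (U i)ᴴ)‖ := by
        rw [randomUnitaryChannel_apply]; exact norm_sum_le _ _
    _ = ∑ i, p i * ‖ρ‖ := by
        simp only [norm_smul, hconj, RCLike.norm_ofReal, abs_of_nonneg (hp _)]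
    _ = ‖ρ‖ := by rw [← Finset.sum_mul, hpsum, one_mul]

end RandomUnitaryChannel

namespace LinearMap

variable {R M : Type*} [CommSemiring R] [AddCommMonoid M] [Module R M]

theorem pow_succ_apply_of_apply_eq_smul_add (T : M →ₗ[R] M) {μ : R} {x y : M}
    (hx : T x = μ • x) (hy : T y = μ • y + x) (n : ℕ) :
    (T ^ (n + 1)) y = μ ^ (n + 1) • y + ((n + 1 : ℕ) : R) • μ ^ n • x := by
  induction n with
  | zero => simp [hy]
  | succ n ih =>
    rw [pow_succ', Module.End.mul_apply, ih, map_add, map_smul, map_smul, map_smul, hx, hy]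
    push_cast
    module

variable {𝕜 E : Type*} [RCLike 𝕜] [NormedAddCommGroup E] [NormedSpace 𝕜 E]

theorem norm_pow_apply_le_of_norm_apply_le {T : E →ₗ[𝕜] E} (hT : ∀ x, ‖T x‖ ≤ ‖x‖)
    (n : ℕ) (x : E) : ‖(T ^ n) x‖ ≤ ‖x‖ := by
  induction n with
  | zero => simp
  | succ n ih =>
    rw [pow_succ', Module.End.mul_apply]
    exact (hT _).trans ih

/- `RCLike` matters: over a non-archimedean field `‖(n : 𝕜)‖` stays bounded, and the Jordan block
`!![1, 1; 0, 1]` is a contraction for the sup norm. -/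
theorem disjoint_ker_range_sub_smul_one {T : E →ₗ[𝕜] E} (hT : ∀ x, ‖T x‖ ≤ ‖x‖) {μ : 𝕜}
    (hμ : ‖μ‖ = 1) : Disjoint (ker (T - μ • 1)) (range (T - μ • 1)) := by
  rw [Submodule.disjoint_def]
  rintro _ hx ⟨y, rfl⟩
  set x := (T - μ • 1) y
  have hTx : T x = μ • x := by simpa [sub_eq_zero] using hx
  have hTy : T y = μ • y + x := by simp [x]
  have hgrowth (n : ℕ) : (n + 1) * ‖x‖ ≤ 2 * ‖y‖ := calc
    (n + 1) * ‖x‖ = ‖((n + 1 : ℕ) : 𝕜) • μ ^ n • x‖ := by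
      rw [norm_smul, norm_smul, norm_pow, hμ, one_pow, one_mul, RCLike.norm_natCast]
      push_cast; rfl
    _ = ‖(T ^ (n + 1)) y - μ ^ (n + 1) • y‖ := by
      rw [T.pow_succ_apply_of_apply_eq_smul_add hTx hTy, add_sub_cancel_left]
    _ ≤ ‖(T ^ (n + 1)) y‖ + ‖μ ^ (n + 1) • y‖ := norm_sub_le _ _
    _ ≤ 2 * ‖y‖ := by
      rw [norm_smul, norm_pow, hμ, one_pow, one_mul, two_mul]
      gcongr
      exact norm_pow_apply_le_of_norm_apply_le hT _ _
  by_contra hx0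
  obtain ⟨n, hn⟩ := exists_nat_gt (2 * ‖y‖ / ‖x‖)
  rw [div_lt_iff₀ (norm_pos_iff.2 hx0)] at hn
  linarith [hgrowth n, norm_nonneg x]

end LinearMap

theorem stmt_3_general {d m : ℕ}
    (U : Fin m → Matrix (Fin d) (Fin d) ℂ)
    (hU : ∀ i, U i ∈ Matrix.unitaryGroup (Fin d) ℂ)
    (p : Fin m → ℝ) (hp : ∀ i, 0 < p i) (hpsum : ∑ i, p i = 1)
    (Φ : Matrix (Fin d) (Fin d) ℂ → Matrix (Fin d) (Fin d) ℂ)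
    (hΦ : ∀ ρ, Φ ρ = ∑ i, (p i : ℂ) • (U i * ρ * (U i)ᴴ))
    (lam : ℂ) (hlam : ‖lam‖ = 1)
    (X : Matrix (Fin d) (Fin d) ℂ)
    (hker : Φ X = lam • X)
    (hran : ∃ Y, X = Φ Y - lam • Y) :
    X = 0 := by
  have hΦ_eq (ρ : Matrix (Fin d) (Fin d) ℂ) : Φ ρ = randomUnitaryChannel p U ρ := by
    simp [hΦ, randomUnitaryChannel_apply]
  have hdisj := LinearMap.disjoint_ker_range_sub_smul_one
    (norm_randomUnitaryChannel_apply_le hU (fun i ↦ (hp i).le) hpsum) hlam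
  obtain ⟨Y, hY⟩ := hran
  refine Submodule.disjoint_def.mp hdisj X ?_ ⟨Y, ?_⟩
  · simp [← hΦ_eq, hker]
  · simp [← hΦ_eq, hY]

theorem stmt_3 {d m : ℕ} (hd : 1 ≤ d)
    (U : Fin m → Matrix (Fin d) (Fin d) ℂ)
    (hU : ∀ i, U i ∈ Matrix.unitaryGroup (Fin d) ℂ)
    (p : Fin m → ℝ) (hp : ∀ i, 0 < p i) (hpsum : ∑ i, p i = 1)
    (Φ : Matrix (Fin d) (Fin d) ℂ → Matrix (Fin d) (Fin d) ℂ)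
    (hΦ : ∀ ρ, Φ ρ = ∑ i, (p i : ℂ) • (U i * ρ * (U i)ᴴ))
    (lam : ℂ) (hlam : ‖lam‖ = 1)
    (X : Matrix (Fin d) (Fin d) ℂ)
    (hker : Φ X = lam • X)
    (hran : ∃ Y, X = Φ Y - lam • Y) :
    X = 0 :=
  stmt_3_general U hU p hp hpsum Φ hΦ lam hlam X hker hran
end

section
/- Structure theorem for attractors: for every λ ∈ ℂ with |λ| = 1, the eigenspace of the random unitary operation Φ for λ equals the set of matrices intertwining all the unitaries up to the phase λ; that is, Φ(X) = λ·X holds if and only if U_i · X = λ · (X · U_i) for every i = 1, …, m. -/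
/-
Write `Y i = U i * X * (U i)ᴴ`. Conjugation by a unitary preserves the Hilbert–Schmidt norm, so
every `Y i` has norm `‖X‖ = ‖λ • X‖`. If `Φ X = λ • X`, then `λ • X` is a convex combination with
positive weights of the `Y i`, all of which lie in the closed ball of radius `‖λ • X‖`; since the
Hilbert–Schmidt norm comes from an inner product, the variance identity
`∑ pᵢ ‖Yᵢ - Z‖² = ∑ pᵢ ‖Yᵢ‖² - ‖Z‖²` (for `Z = ∑ pᵢ Yᵢ`) forces `Y i = λ • X` for every `i`,
which is `U i * X = λ • (X * U i)` after multiplying by `U i` on the right. The converse is a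
direct computation.
-/

open Finset Matrix

section VarianceIdentity

variable {𝕜 E ι : Type*} [RCLike 𝕜] [NormedAddCommGroup E] [InnerProductSpace 𝕜 E]
  {s : Finset ι} {w : ι → ℝ} {y : ι → E}

theorem sum_mul_re_inner_eq (z : E) :
    ∑ i ∈ s, w i * RCLike.re (inner 𝕜 (y i) z) =
      RCLike.re (inner 𝕜 (∑ i ∈ s, (w i : 𝕜) • y i) z) := by
  simp only [sum_inner, inner_smul_left, RCLike.conj_ofReal, map_sum, RCLike.re_ofReal_mul]

theorem sum_mul_norm_sub_sq_eq (hw : ∑ i ∈ s, w i = 1) :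
    ∑ i ∈ s, w i * ‖y i - ∑ j ∈ s, (w j : 𝕜) • y j‖ ^ 2 =
      ∑ i ∈ s, w i * ‖y i‖ ^ 2 - ‖∑ j ∈ s, (w j : 𝕜) • y j‖ ^ 2 := by
  set z := ∑ j ∈ s, (w j : 𝕜) • y j
  have hz : ∑ i ∈ s, w i * RCLike.re (inner 𝕜 (y i) z) = ‖z‖ ^ 2 := by
    rw [sum_mul_re_inner_eq, inner_self_eq_norm_sq]
  simp only [@norm_sub_sq 𝕜, mul_add, mul_sub, sum_add_distrib, sum_sub_distrib, ← sum_mul, hw,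
    mul_left_comm (w _) 2, ← mul_sum, hz]
  ring

theorem eq_of_sum_smul_eq_of_norm_le (hw : ∀ i ∈ s, 0 < w i) (hw1 : ∑ i ∈ s, w i = 1)
    {z : E} (hz : ∑ i ∈ s, (w i : 𝕜) • y i = z) (hy : ∀ i ∈ s, ‖y i‖ ≤ ‖z‖) :
    ∀ i ∈ s, y i = z := by
  have hvar := sum_mul_norm_sub_sq_eq (𝕜 := 𝕜) (y := y) hw1
  rw [hz] at hvar
  have hle : ∑ i ∈ s, w i * ‖y i‖ ^ 2 ≤ ‖z‖ ^ 2 := calc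
    ∑ i ∈ s, w i * ‖y i‖ ^ 2 ≤ ∑ i ∈ s, w i * ‖z‖ ^ 2 := by
      gcongr with i hi
      · exact (hw i hi).le
      · exact hy i hi
    _ = ‖z‖ ^ 2 := by rw [← sum_mul, hw1, one_mul]
  have hnonneg : ∀ i ∈ s, 0 ≤ w i * ‖y i - z‖ ^ 2 := fun i hi => by
    have := hw i hi
    positivity
  have hzero := (sum_eq_zero_iff_of_nonneg hnonneg).1
    (le_antisymm (by linarith) (sum_nonneg hnonneg))
  intro i hi
  simpa [(hw i hi).ne', sub_eq_zero] using hzero i hi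

end VarianceIdentity

namespace Matrix

theorem mul_mul_conjTranspose_eq_smul_iff {n α : Type*} [Fintype n] [DecidableEq n] [CommRing α]
    [StarRing α] {U : Matrix n n α} (hU : U ∈ unitaryGroup n α) (c : α) (X : Matrix n n α) :
    U * X * Uᴴ = c • X ↔ U * X = c • (X * U) := by
  have hUU : Uᴴ * U = 1 := Unitary.star_mul_self_of_mem hU
  have hUU' : U * Uᴴ = 1 := Unitary.mul_star_self_of_mem hU
  constructor
  · intro h
    calc U * X = U * X * Uᴴ * U := by rw [Matrix.mul_assoc (U * X), hUU, Matrix.mul_one]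
      _ = c • (X * U) := by rw [h, Matrix.smul_mul]
  · intro h
    rw [h, Matrix.smul_mul, Matrix.mul_assoc, hUU', Matrix.mul_one]

section HilbertSchmidt

open scoped ComplexOrder

variable {n : Type*} [Fintype n] [DecidableEq n]

noncomputable abbrev hilbertSchmidtNormedAddCommGroup : NormedAddCommGroup (Matrix n n ℂ) :=
  toMatrixNormedAddCommGroup 1 PosDef.one

attribute [local instance] hilbertSchmidtNormedAddCommGroup

noncomputable abbrev hilbertSchmidtInnerProductSpace : InnerProductSpace ℂ (Matrix n n ℂ) :=
  toMatrixInnerProductSpace 1 PosSemidef.one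

attribute [local instance] hilbertSchmidtInnerProductSpace

theorem hilbertSchmidt_norm_sq (A : Matrix n n ℂ) : ‖A‖ ^ 2 = (A * Aᴴ).trace.re := by
  rw [norm_sq_eq_re_inner (𝕜 := ℂ)]
  change (A * 1 * Aᴴ).trace.re = _
  rw [Matrix.mul_one]

theorem hilbertSchmidt_norm_unitary_conj {U : Matrix n n ℂ} (hU : U ∈ unitaryGroup n ℂ)
    (X : Matrix n n ℂ) : ‖U * X * Uᴴ‖ = ‖X‖ := by
  have hUU : Uᴴ * U = 1 := Unitary.star_mul_self_of_mem hU
  have hsq : ‖U * X * Uᴴ‖ ^ 2 = ‖X‖ ^ 2 := by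
    have hprod : U * X * Uᴴ * (U * X * Uᴴ)ᴴ = U * (X * Xᴴ) * Uᴴ := by
      simp only [conjTranspose_mul, conjTranspose_conjTranspose, Matrix.mul_assoc]
      rw [← Matrix.mul_assoc Uᴴ U, hUU, Matrix.one_mul]
    rw [hilbertSchmidt_norm_sq, hilbertSchmidt_norm_sq, hprod, trace_mul_cycle, hUU,
      Matrix.one_mul]
  exact (pow_left_inj₀ (norm_nonneg _) (norm_nonneg _) two_ne_zero).1 hsq

theorem unitary_conj_eq_smul_of_sum_eq {m : Type*} [Fintype m] {U : m → Matrix n n ℂ}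
    (hU : ∀ i, U i ∈ unitaryGroup n ℂ) {p : m → ℝ} (hp : ∀ i, 0 < p i) (hpsum : ∑ i, p i = 1)
    {lam : ℂ} (hlam : ‖lam‖ = 1) {X : Matrix n n ℂ}
    (hX : ∑ i, (p i : ℂ) • (U i * X * (U i)ᴴ) = lam • X) (i : m) :
    U i * X * (U i)ᴴ = lam • X := by
  refine eq_of_sum_smul_eq_of_norm_le (fun i _ => hp i) hpsum hX (fun j _ => ?_) i (mem_univ i)
  rw [hilbertSchmidt_norm_unitary_conj (hU j), norm_smul, hlam, one_mul]

end HilbertSchmidt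

end Matrix

theorem stmt_5_general {d m : ℕ}
    (U : Fin m → Matrix (Fin d) (Fin d) ℂ)
    (hU : ∀ i, U i ∈ Matrix.unitaryGroup (Fin d) ℂ)
    (p : Fin m → ℝ) (hp : ∀ i, 0 < p i) (hpsum : ∑ i, p i = 1)
    (Φ : Matrix (Fin d) (Fin d) ℂ → Matrix (Fin d) (Fin d) ℂ)
    (hΦ : ∀ ρ, Φ ρ = ∑ i, (p i : ℂ) • (U i * ρ * (U i)ᴴ))
    (lam : ℂ) (hlam : ‖lam‖ = 1)
    (X : Matrix (Fin d) (Fin d) ℂ) :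
    Φ X = lam • X ↔ ∀ i, U i * X = lam • (X * U i) := by
  simp only [hΦ, ← mul_mul_conjTranspose_eq_smul_iff (hU _)]
  constructor
  · exact unitary_conj_eq_smul_of_sum_eq hU hp hpsum hlam
  · intro h
    have hpsumC : ∑ i, (p i : ℂ) = 1 := by exact_mod_cast hpsum
    simp only [h, ← sum_smul, hpsumC, one_smul]

theorem stmt_5 {d m : ℕ} (hd : 1 ≤ d)
    (U : Fin m → Matrix (Fin d) (Fin d) ℂ)
    (hU : ∀ i, U i ∈ Matrix.unitaryGroup (Fin d) ℂ)
    (p : Fin m → ℝ) (hp : ∀ i, 0 < p i) (hpsum : ∑ i, p i = 1)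
    (Φ : Matrix (Fin d) (Fin d) ℂ → Matrix (Fin d) (Fin d) ℂ)
    (hΦ : ∀ ρ, Φ ρ = ∑ i, (p i : ℂ) • (U i * ρ * (U i)ᴴ))
    (lam : ℂ) (hlam : ‖lam‖ = 1)
    (X : Matrix (Fin d) (Fin d) ℂ) :
    Φ X = lam • X ↔ ∀ i, U i * X = lam • (X * U i) :=
  stmt_5_general U hU p hp hpsum Φ hΦ lam hlam X
end

section
/- For every eigenvalue λ of the random unitary operation Φ with |λ| = 1, the eigenspace Ker(Φ − λ·id) is orthogonal to the range Ran(Φ − λ·id) with respect to the Hilbert–Schmidt inner product: for every K with Φ(K) = λ·K and every Y, one has Tr(K†·(Φ(Y) − λ·Y)) = 0. -/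
/-!
The Hilbert–Schmidt adjoint of `Φ = ∑ pᵢ Uᵢ (·) Uᵢᴴ` is `Φ* = ∑ pᵢ Uᵢᴴ (·) Uᵢ`, a convex combination
of isometries and hence a contraction. If `Φ K = λ K` with `‖λ‖ = 1`, then
`re ⟪Φ* K, conj λ • K⟫ = ‖K‖² = ‖conj λ • K‖²` while `‖Φ* K‖ ≤ ‖K‖`, which forces `Φ* K = conj λ • K`
(expand `‖Φ* K - conj λ • K‖²`). Hence `⟪K, Φ Y⟫ = ⟪Φ* K, Y⟫ = λ ⟪K, Y⟫`.
-/

open Matrix BigOperators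
open scoped InnerProductSpace

variable {𝕜 n ι : Type*} [RCLike 𝕜]

theorem eq_of_norm_le_of_re_inner_eq_norm_sq {E : Type*} [NormedAddCommGroup E]
    [InnerProductSpace 𝕜 E] {x y : E} (hle : ‖x‖ ≤ ‖y‖) (hxy : RCLike.re ⟪x, y⟫_𝕜 = ‖y‖ ^ 2) :
    x = y := by
  have hsq : ‖x - y‖ ^ 2 ≤ 0 := by
    rw [@norm_sub_sq 𝕜, hxy]
    nlinarith [norm_nonneg x]
  rw [← sub_eq_zero, ← norm_eq_zero]
  exact pow_eq_zero_iff two_ne_zero |>.mp (le_antisymm hsq (sq_nonneg _))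

variable [Fintype n] [Fintype ι]

def mixedUnitaryMap (p : ι → ℝ) (U : ι → Matrix n n 𝕜) (ρ : Matrix n n 𝕜) : Matrix n n 𝕜 :=
  ∑ i, (p i : 𝕜) • (U i * ρ * (U i)ᴴ)

theorem trace_conjTranspose_mul_mixedUnitaryMap (p : ι → ℝ) (U : ι → Matrix n n 𝕜)
    (A B : Matrix n n 𝕜) :
    (Aᴴ * mixedUnitaryMap p U B).trace
      = ((mixedUnitaryMap p (fun i ↦ (U i)ᴴ) A)ᴴ * B).trace := by
  simp only [mixedUnitaryMap, conjTranspose_sum, conjTranspose_smul, RCLike.star_def,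
    RCLike.conj_ofReal, Matrix.mul_sum, Matrix.sum_mul, Matrix.mul_smul, Matrix.smul_mul,
    trace_sum, trace_smul, conjTranspose_mul, conjTranspose_conjTranspose]
  refine Finset.sum_congr rfl fun i _ ↦ ?_
  rw [← mul_assoc, ← mul_assoc, trace_mul_comm, ← mul_assoc, ← mul_assoc]

variable [DecidableEq n]

section HilbertSchmidt

open scoped ComplexOrder

noncomputable local instance : NormedAddCommGroup (Matrix n n 𝕜) :=
  toMatrixNormedAddCommGroup 1 PosDef.one

local instance : InnerProductSpace 𝕜 (Matrix n n 𝕜) :=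
  toMatrixInnerProductSpace 1 PosSemidef.one

theorem inner_eq_trace_conjTranspose_mul (A B : Matrix n n 𝕜) : ⟪A, B⟫_𝕜 = (Aᴴ * B).trace := by
  change (B * 1 * Aᴴ).trace = _
  rw [mul_one, trace_mul_comm]

theorem norm_unitary_mul_mul_conjTranspose {U : Matrix n n 𝕜} (hU : U ∈ unitaryGroup n 𝕜)
    (A : Matrix n n 𝕜) : ‖U * A * Uᴴ‖ = ‖A‖ := by
  have hUU : Uᴴ * U = 1 := hU.1
  have htrace : ((U * A * Uᴴ)ᴴ * (U * A * Uᴴ)).trace = (Aᴴ * A).trace := by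
    simp only [conjTranspose_mul, conjTranspose_conjTranspose, mul_assoc]
    rw [← mul_assoc Uᴴ U, hUU, one_mul, trace_mul_comm, mul_assoc, mul_assoc, hUU, mul_one]
  rw [norm_eq_sqrt_re_inner (𝕜 := 𝕜), norm_eq_sqrt_re_inner (𝕜 := 𝕜),
    inner_eq_trace_conjTranspose_mul, inner_eq_trace_conjTranspose_mul, htrace]

variable {p : ι → ℝ} {U : ι → Matrix n n 𝕜}

theorem norm_mixedUnitaryMap_le (hU : ∀ i, U i ∈ unitaryGroup n 𝕜) (hp : ∀ i, 0 ≤ p i)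
    (hpsum : ∑ i, p i = 1) (X : Matrix n n 𝕜) : ‖mixedUnitaryMap p U X‖ ≤ ‖X‖ :=
  calc ‖mixedUnitaryMap p U X‖ ≤ ∑ i, ‖(p i : 𝕜) • (U i * X * (U i)ᴴ)‖ := norm_sum_le _ _
    _ = ∑ i, p i * ‖X‖ := by
      refine Finset.sum_congr rfl fun i _ ↦ ?_
      rw [norm_smul, norm_unitary_mul_mul_conjTranspose (hU i), RCLike.norm_ofReal,
        abs_of_nonneg (hp i)]
    _ = ‖X‖ := by rw [← Finset.sum_mul, hpsum, one_mul]

theorem mixedUnitaryMap_conjTranspose_eq_of_eq_smul (hU : ∀ i, U i ∈ unitaryGroup n 𝕜)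
    (hp : ∀ i, 0 ≤ p i) (hpsum : ∑ i, p i = 1) {lam : 𝕜} (hlam : ‖lam‖ = 1)
    {K : Matrix n n 𝕜} (hK : mixedUnitaryMap p U K = lam • K) :
    mixedUnitaryMap p (fun i ↦ (U i)ᴴ) K = star lam • K := by
  have hnorm : ‖star lam • K‖ = ‖K‖ := by rw [norm_smul, norm_star, hlam, one_mul]
  apply eq_of_norm_le_of_re_inner_eq_norm_sq (𝕜 := 𝕜)
  · rw [hnorm]
    exact norm_mixedUnitaryMap_le (fun i ↦ Unitary.star_mem (hU i)) hp hpsum K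
  · rw [hnorm, inner_smul_right, inner_eq_trace_conjTranspose_mul,
      ← trace_conjTranspose_mul_mixedUnitaryMap, hK, Matrix.mul_smul, trace_smul, smul_eq_mul,
      ← mul_assoc, RCLike.star_def, RCLike.conj_mul, hlam, ← inner_eq_trace_conjTranspose_mul]
    simp

end HilbertSchmidt

theorem trace_conjTranspose_mul_mixedUnitaryMap_of_eq_smul {p : ι → ℝ} {U : ι → Matrix n n 𝕜}
    (hU : ∀ i, U i ∈ unitaryGroup n 𝕜) (hp : ∀ i, 0 ≤ p i) (hpsum : ∑ i, p i = 1) {lam : 𝕜}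
    (hlam : ‖lam‖ = 1) {K : Matrix n n 𝕜} (hK : mixedUnitaryMap p U K = lam • K)
    (Y : Matrix n n 𝕜) : (Kᴴ * mixedUnitaryMap p U Y).trace = lam * (Kᴴ * Y).trace := by
  rw [trace_conjTranspose_mul_mixedUnitaryMap,
    mixedUnitaryMap_conjTranspose_eq_of_eq_smul hU hp hpsum hlam hK, conjTranspose_smul,
    star_star, smul_mul, trace_smul, smul_eq_mul]

theorem stmt_6_general {d m : ℕ}
    (U : Fin m → Matrix (Fin d) (Fin d) ℂ)
    (hU : ∀ i, U i ∈ Matrix.unitaryGroup (Fin d) ℂ)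
    (p : Fin m → ℝ) (hp : ∀ i, 0 < p i) (hpsum : ∑ i, p i = 1)
    (Φ : Matrix (Fin d) (Fin d) ℂ → Matrix (Fin d) (Fin d) ℂ)
    (hΦ : ∀ ρ, Φ ρ = ∑ i, (p i : ℂ) • (U i * ρ * (U i)ᴴ))
    (lam : ℂ) (hlam : ‖lam‖ = 1)
    (K : Matrix (Fin d) (Fin d) ℂ) (hK : Φ K = lam • K)
    (Y : Matrix (Fin d) (Fin d) ℂ) :
    (Kᴴ * (Φ Y - lam • Y)).trace = 0 := by
  obtain rfl : Φ = mixedUnitaryMap p U := funext hΦ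
  rw [Matrix.mul_sub, trace_sub, Matrix.mul_smul, trace_smul, smul_eq_mul,
    trace_conjTranspose_mul_mixedUnitaryMap_of_eq_smul hU (fun i ↦ (hp i).le) hpsum hlam hK,
    sub_self]

theorem stmt_6 {d m : ℕ} (hd : 1 ≤ d)
    (U : Fin m → Matrix (Fin d) (Fin d) ℂ)
    (hU : ∀ i, U i ∈ Matrix.unitaryGroup (Fin d) ℂ)
    (p : Fin m → ℝ) (hp : ∀ i, 0 < p i) (hpsum : ∑ i, p i = 1)
    (Φ : Matrix (Fin d) (Fin d) ℂ → Matrix (Fin d) (Fin d) ℂ)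
    (hΦ : ∀ ρ, Φ ρ = ∑ i, (p i : ℂ) • (U i * ρ * (U i)ᴴ))
    (lam : ℂ) (hlam : ‖lam‖ = 1)
    (K : Matrix (Fin d) (Fin d) ℂ) (hK : Φ K = lam • K)
    (Y : Matrix (Fin d) (Fin d) ℂ) :
    (Kᴴ * (Φ Y - lam • Y)).trace = 0 :=
  stmt_6_general U hU p hp hpsum Φ hΦ lam hlam K hK Y
end

section
/- Asymptotic dynamics: let P denote the orthogonal projection (with respect to the Hilbert–Schmidt inner product) of the space of d×d complex matrices onto the attractor space Atr(Φ), the direct sum of all eigenspaces Ker(Φ − λ·id) over eigenvalues λ with |λ| = 1. Then for every d×d complex matrix ρ, ‖Φ^n(ρ) − (Φ ∘ P)^n(ρ)‖_HS → 0 as n → ∞. -/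
/-!
A convex combination of unitary conjugations is a contraction for the Hilbert–Schmidt norm. For a
contraction `T`, an eigenvector with unimodular eigenvalue `λ` is also an eigenvector of `T†`
(with eigenvalue `conj λ`), so the attractor space is `T†`-invariant and its orthogonal complement
is `T`-invariant. On that complement `T` is a contraction without unimodular eigenvalues, so its
spectral radius is `< 1` and its powers tend to `0` by Gelfand's formula. Finally `P` fixes the
`T`-invariant attractor space, so `T^(n+1) ρ - (T ∘ P)^(n+1) ρ = T^(n+1) (ρ - P ρ)`, and
`ρ - P ρ` lies in the orthogonal complement.
-/

open Matrix BigOperators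

/-- The Hilbert–Schmidt (Frobenius) norm of a matrix, `‖A‖ = √Tr(A†A)`. -/
noncomputable def hsNorm {d : ℕ} (A : Matrix (Fin d) (Fin d) ℂ) : ℝ :=
  Real.sqrt ((Aᴴ * A).trace.re)

open Filter Topology Module.End

section LinearAlgebra

variable {R M N : Type*} [CommRing R] [AddCommGroup M] [Module R M] [AddCommGroup N] [Module R N]

theorem LinearEquiv.conj_pow (e : M ≃ₗ[R] N) (f : Module.End R M) (n : ℕ) :
    e.conj (f ^ n) = e.conj f ^ n :=
  map_pow e.conjRingEquiv f n

theorem eigenspace_conj (e : M ≃ₗ[R] N) (T : Module.End R M) (lam : R) :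
    eigenspace (e.conj T) lam = (eigenspace T lam).map (e : M →ₗ[R] N) := by
  ext x
  rw [Submodule.mem_map_equiv, mem_eigenspace_iff, mem_eigenspace_iff, LinearEquiv.conj_apply_apply,
    ← e.symm.injective.eq_iff, e.symm_apply_apply, map_smul]

theorem pow_comp_apply_of_mem {T P : Module.End R M} {K : Submodule R M}
    (hK : K ∈ T.invtSubmodule) (hPK : ∀ y ∈ K, P y = y) (n : ℕ) {y : M} (hy : y ∈ K) :
    ((T ∘ₗ P) ^ n) y = (T ^ n) y := by
  induction n generalizing y with
  | zero => rfl
  | succ n ih =>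
    rw [pow_succ, pow_succ, Module.End.mul_apply, Module.End.mul_apply, LinearMap.comp_apply,
      hPK y hy, ih (hK hy)]

end LinearAlgebra

section BanachAlgebra

variable {A : Type*} [NormedRing A] [NormedAlgebra ℂ A] [CompleteSpace A]

theorem tendsto_pow_nhds_zero_of_spectralRadius_lt_one {a : A} (ha : spectralRadius ℂ a < 1) :
    Tendsto (fun n ↦ a ^ n) atTop (𝓝 0) := by
  obtain ⟨r, har, hr1⟩ := ENNReal.lt_iff_exists_nnreal_btwn.mp ha
  have hroot : ∀ᶠ n : ℕ in atTop, (‖a ^ n‖₊ : ENNReal) ^ (1 / n : ℝ) < r :=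
    (spectrum.pow_nnnorm_pow_one_div_tendsto_nhds_spectralRadius a).eventually
      (gt_mem_nhds har)
  refine squeeze_zero_norm' ?_ (tendsto_pow_atTop_nhds_zero_of_lt_one r.coe_nonneg
    (by exact_mod_cast hr1))
  filter_upwards [hroot, eventually_gt_atTop 0] with n hn hn0
  have hn' : ‖a ^ n‖₊ ^ (n : ℝ)⁻¹ < r := by
    rw [← ENNReal.coe_lt_coe, ENNReal.coe_rpow_of_nonneg _ (by positivity)]
    simpa using hn
  rw [NNReal.rpow_inv_lt_iff (by positivity), NNReal.rpow_natCast] at hn'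
  exact_mod_cast hn'.le

theorem spectralRadius_lt_one_of_norm_le_one [Nontrivial A] [NormOneClass A] {a : A}
    (ha : ‖a‖ ≤ 1) (h : ∀ z ∈ spectrum ℂ a, ‖z‖ ≠ 1) : spectralRadius ℂ a < 1 := by
  obtain ⟨z, hz, hrad⟩ := spectrum.exists_nnnorm_eq_spectralRadius a
  rw [← hrad, ENNReal.coe_lt_one_iff, ← NNReal.coe_lt_one, coe_nnnorm]
  exact lt_of_le_of_ne ((spectrum.norm_le_norm_of_mem hz).trans ha) (h z hz)

end BanachAlgebra

theorem tendsto_pow_apply_of_forall_hasEigenvalue_norm_ne_one {F : Type*}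
    [NormedAddCommGroup F] [NormedSpace ℂ F] [FiniteDimensional ℂ F] {S : Module.End ℂ F}
    (hS : ∀ x, ‖S x‖ ≤ ‖x‖) (h : ∀ μ, S.HasEigenvalue μ → ‖μ‖ ≠ 1) (x : F) :
    Tendsto (fun n ↦ (S ^ n) x) atTop (𝓝 0) := by
  cases subsingleton_or_nontrivial F
  · simp [Subsingleton.elim _ (0 : F)]
  set a := LinearMap.toContinuousLinearMap S
  have ha : ‖a‖ ≤ 1 := a.opNorm_le_bound zero_le_one fun x ↦ by simpa [a] using hS x
  have hspec : ∀ z ∈ spectrum ℂ a, ‖z‖ ≠ 1 := fun z hz ↦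
    h z (hasEigenvalue_iff_mem_spectrum.mpr (ContinuousLinearMap.spectrum_eq (f := a) ▸ hz))
  have hpow := tendsto_pow_nhds_zero_of_spectralRadius_lt_one
    (spectralRadius_lt_one_of_norm_le_one ha hspec)
  have := ((ContinuousLinearMap.apply ℂ F x).continuous.tendsto 0).comp hpow
  simpa [a, Function.comp_def, ← ContinuousLinearMap.toLinearMap_pow, Module.End.coe_pow] using this

section Attractor

variable {V W : Type*} [AddCommGroup V] [Module ℂ V] [AddCommGroup W] [Module ℂ W]

def attractorSpace (T : Module.End ℂ V) : Submodule ℂ V :=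
  ⨆ lam ∈ {l : ℂ | ‖l‖ = 1}, eigenspace T lam

theorem eigenspace_le_attractorSpace (T : Module.End ℂ V) {lam : ℂ} (hlam : ‖lam‖ = 1) :
    eigenspace T lam ≤ attractorSpace T :=
  le_iSup₂ (f := fun lam (_ : lam ∈ {l : ℂ | ‖l‖ = 1}) ↦ eigenspace T lam) lam hlam

theorem attractorSpace_mem_invtSubmodule_of_eigenspace {T f : Module.End ℂ V}
    (h : ∀ lam : ℂ, ‖lam‖ = 1 → eigenspace T lam ∈ f.invtSubmodule) :
    attractorSpace T ∈ f.invtSubmodule :=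
  iSup₂_le fun lam hlam ↦
    (h lam hlam).trans (Submodule.comap_mono (eigenspace_le_attractorSpace T hlam))

theorem attractorSpace_mem_invtSubmodule (T : Module.End ℂ V) :
    attractorSpace T ∈ T.invtSubmodule :=
  attractorSpace_mem_invtSubmodule_of_eigenspace fun lam _ ↦ eigenspace_mem_invtSubmodule T lam

theorem attractorSpace_conj (e : V ≃ₗ[ℂ] W) (T : Module.End ℂ V) :
    attractorSpace (e.conj T) = (attractorSpace T).map (e : V →ₗ[ℂ] W) := by
  simp only [attractorSpace, eigenspace_conj, Submodule.map_iSup]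

end Attractor

section Contraction

variable {E : Type*} [NormedAddCommGroup E] [InnerProductSpace ℂ E] [FiniteDimensional ℂ E]
  {T : Module.End ℂ E}

theorem norm_adjoint_apply_le (hT : ∀ x, ‖T x‖ ≤ ‖x‖) (x : E) :
    ‖LinearMap.adjoint T x‖ ≤ ‖x‖ := by
  have hnorm : ‖LinearMap.toContinuousLinearMap T‖ ≤ 1 :=
    ContinuousLinearMap.opNorm_le_bound _ zero_le_one fun x ↦ by simpa using hT x
  calc ‖LinearMap.adjoint T x‖ = ‖(LinearMap.toContinuousLinearMap T).adjoint x‖ := by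
        rw [← LinearMap.adjoint_toContinuousLinearMap]; rfl
    _ ≤ ‖x‖ := by
        refine (ContinuousLinearMap.le_opNorm _ x).trans ?_
        rw [LinearIsometryEquiv.norm_map]
        simpa using mul_le_mul_of_nonneg_right hnorm (norm_nonneg x)

/-- Equality in Cauchy–Schwarz: `⟪T† x, conj lam • x⟫ = ‖x‖²` while `‖T† x‖ ≤ ‖x‖`. -/
theorem adjoint_apply_eq_of_apply_eq_smul (hT : ∀ x, ‖T x‖ ≤ ‖x‖) {lam : ℂ} (hlam : ‖lam‖ = 1)
    {x : E} (hx : T x = lam • x) : LinearMap.adjoint T x = starRingEnd ℂ lam • x := by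
  have hinner : inner ℂ (LinearMap.adjoint T x) (starRingEnd ℂ lam • x) = (‖x‖ ^ 2 : ℂ) := by
    rw [inner_smul_right, LinearMap.adjoint_inner_left, hx, inner_smul_right, ← mul_assoc,
      Complex.conj_mul', hlam, inner_self_eq_norm_sq_to_K]
    simp
  have hsq : ‖LinearMap.adjoint T x - starRingEnd ℂ lam • x‖ ^ 2 ≤ 0 := by
    rw [norm_sub_sq (𝕜 := ℂ), hinner, norm_smul, Complex.norm_conj, hlam, one_mul]
    have := norm_adjoint_apply_le hT x
    rw [← Complex.ofReal_pow, RCLike.re_to_complex, Complex.ofReal_re]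
    nlinarith [norm_nonneg (LinearMap.adjoint T x)]
  rw [← sub_eq_zero, ← norm_eq_zero]
  exact pow_eq_zero_iff two_ne_zero |>.mp (le_antisymm hsq (sq_nonneg _))

theorem orthogonal_attractorSpace_mem_invtSubmodule (hT : ∀ x, ‖T x‖ ≤ ‖x‖) :
    (attractorSpace T)ᗮ ∈ T.invtSubmodule := by
  refine Module.End.mem_invtSubmodule_adjoint_iff.mp
    (attractorSpace_mem_invtSubmodule_of_eigenspace fun lam hlam x hx ↦ ?_)
  rw [Submodule.mem_comap, adjoint_apply_eq_of_apply_eq_smul hT hlam (mem_eigenspace_iff.mp hx)]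
  exact Submodule.smul_mem _ _ hx

theorem tendsto_pow_apply_of_mem_orthogonal_attractorSpace (hT : ∀ x, ‖T x‖ ≤ ‖x‖) {y : E}
    (hy : y ∈ (attractorSpace T)ᗮ) : Tendsto (fun n ↦ (T ^ n) y) atTop (𝓝 0) := by
  have hinv : ∀ x ∈ (attractorSpace T)ᗮ, T x ∈ (attractorSpace T)ᗮ :=
    orthogonal_attractorSpace_mem_invtSubmodule hT
  set S : Module.End ℂ (attractorSpace T)ᗮ := T.restrict hinv
  have hS : ∀ x, ‖S x‖ ≤ ‖x‖ := fun x ↦ hT x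
  have hspec : ∀ μ, S.HasEigenvalue μ → ‖μ‖ ≠ 1 := by
    intro μ hμ hμ1
    obtain ⟨x, hx, hx0⟩ := hμ.exists_hasEigenvector
    have hxK : (x : E) ∈ attractorSpace T := eigenspace_le_attractorSpace T hμ1
      (mem_eigenspace_iff.mpr congr(Subtype.val $(mem_eigenspace_iff.mp hx)))
    exact hx0 (Subtype.ext (Submodule.disjoint_def.mp (Submodule.orthogonal_disjoint _) _ hxK x.2))
  have := (continuous_subtype_val.tendsto 0).comp
    (tendsto_pow_apply_of_forall_hasEigenvalue_norm_ne_one hS hspec ⟨y, hy⟩)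
  refine this.congr fun n ↦ ?_
  rw [Function.comp_apply, Module.End.pow_restrict]
  rfl

theorem tendsto_pow_sub_pow_comp_apply (hT : ∀ x, ‖T x‖ ≤ ‖x‖) {P : Module.End ℂ E}
    (hP₁ : ∀ x, P x ∈ attractorSpace T) (hP₂ : ∀ x, x - P x ∈ (attractorSpace T)ᗮ) (x : E) :
    Tendsto (fun n ↦ (T ^ n) x - ((T ∘ₗ P) ^ n) x) atTop (𝓝 0) := by
  have hPK : ∀ y ∈ attractorSpace T, P y = y := fun y hy ↦ (sub_eq_zero.mp <|
    Submodule.disjoint_def.mp (Submodule.orthogonal_disjoint _) _ (Submodule.sub_mem _ hy (hP₁ y))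
      (hP₂ y)).symm
  have hK := attractorSpace_mem_invtSubmodule T
  rw [← tendsto_add_atTop_iff_nat 1]
  refine ((tendsto_pow_apply_of_mem_orthogonal_attractorSpace hT (hP₂ x)).comp
    (tendsto_add_atTop_nat 1)).congr fun n ↦ ?_
  rw [Function.comp_apply, map_sub, pow_succ (T ∘ₗ P), Module.End.mul_apply, LinearMap.comp_apply,
    pow_comp_apply_of_mem hK hPK n (hK (hP₁ x))]
  simp only [pow_succ T, Module.End.mul_apply]

end Contraction

/-- Matrices carry no inner-product-space instance; the Hilbert–Schmidt geometry is that of their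
flattening in `ℂ^(d × d)`. -/
def hsEquiv (d : ℕ) : Matrix (Fin d) (Fin d) ℂ ≃ₗ[ℂ] EuclideanSpace ℂ (Fin d × Fin d) where
  toFun A := WithLp.toLp 2 fun ij ↦ A ij.1 ij.2
  map_add' _ _ := rfl
  map_smul' _ _ := rfl
  invFun x := Matrix.of fun i j ↦ x (i, j)
  left_inv _ := rfl
  right_inv _ := rfl

theorem inner_hsEquiv {d : ℕ} (A B : Matrix (Fin d) (Fin d) ℂ) :
    inner ℂ (hsEquiv d A) (hsEquiv d B) = (Aᴴ * B).trace := by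
  simp only [PiLp.inner_apply, RCLike.inner_apply, hsEquiv, Fintype.sum_prod_type, Matrix.trace,
    Matrix.diag_apply, Matrix.mul_apply, Matrix.conjTranspose_apply, RCLike.star_def]
  rw [Finset.sum_comm]
  exact Finset.sum_congr rfl fun _ _ ↦ Finset.sum_congr rfl fun _ _ ↦ mul_comm _ _

theorem hsNorm_eq_norm_hsEquiv {d : ℕ} (A : Matrix (Fin d) (Fin d) ℂ) :
    hsNorm A = ‖hsEquiv d A‖ := by
  rw [norm_eq_sqrt_re_inner (𝕜 := ℂ), inner_hsEquiv]
  rfl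

theorem hsNorm_unitary_conj {d : ℕ} {U : Matrix (Fin d) (Fin d) ℂ}
    (hU : U ∈ Matrix.unitaryGroup (Fin d) ℂ) (A : Matrix (Fin d) (Fin d) ℂ) :
    hsNorm (U * A * Uᴴ) = hsNorm A := by
  have hUU : Uᴴ * U = 1 := Matrix.mem_unitaryGroup_iff'.mp hU
  have : (U * A * Uᴴ)ᴴ * (U * A * Uᴴ) = U * (Aᴴ * A) * Uᴴ := by
    simp only [Matrix.conjTranspose_mul, Matrix.conjTranspose_conjTranspose, Matrix.mul_assoc]
    rw [← Matrix.mul_assoc Uᴴ U, hUU, Matrix.one_mul]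
  rw [hsNorm, hsNorm, this, Matrix.trace_mul_cycle, ← Matrix.mul_assoc, hUU, Matrix.one_mul]

theorem norm_hsEquiv_sum_unitary_conj_le {d m : ℕ} {U : Fin m → Matrix (Fin d) (Fin d) ℂ}
    (hU : ∀ i, U i ∈ Matrix.unitaryGroup (Fin d) ℂ) {p : Fin m → ℝ} (hp : ∀ i, 0 ≤ p i)
    (hpsum : ∑ i, p i = 1) (ρ : Matrix (Fin d) (Fin d) ℂ) :
    ‖hsEquiv d (∑ i, (p i : ℂ) • (U i * ρ * (U i)ᴴ))‖ ≤ ‖hsEquiv d ρ‖ := by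
  calc ‖hsEquiv d (∑ i, (p i : ℂ) • (U i * ρ * (U i)ᴴ))‖
      ≤ ∑ i, ‖(p i : ℂ) • hsEquiv d (U i * ρ * (U i)ᴴ)‖ := by
        simpa only [map_sum, map_smul] using norm_sum_le _ _
    _ = ∑ i, p i * ‖hsEquiv d ρ‖ := by
        refine Finset.sum_congr rfl fun i _ ↦ ?_
        rw [norm_smul, ← hsNorm_eq_norm_hsEquiv, hsNorm_unitary_conj (hU i),
          hsNorm_eq_norm_hsEquiv, Complex.norm_real, Real.norm_of_nonneg (hp i)]
    _ = ‖hsEquiv d ρ‖ := by rw [← Finset.sum_mul, hpsum, one_mul]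

theorem stmt_8_general {d m : ℕ}
    (U : Fin m → Matrix (Fin d) (Fin d) ℂ)
    (hU : ∀ i, U i ∈ Matrix.unitaryGroup (Fin d) ℂ)
    (p : Fin m → ℝ) (hp : ∀ i, 0 < p i) (hpsum : ∑ i, p i = 1)
    (Φ P : Module.End ℂ (Matrix (Fin d) (Fin d) ℂ))
    (hΦ : ∀ ρ, Φ ρ = ∑ i, (p i : ℂ) • (U i * ρ * (U i)ᴴ))
    -- the attractor space: the (internal direct) sum of all eigenspaces of `Φ`
    -- corresponding to eigenvalues of unit modulus
    (Atr : Submodule ℂ (Matrix (Fin d) (Fin d) ℂ))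
    (hAtr : Atr = ⨆ lam ∈ {l : ℂ | ‖l‖ = 1}, Module.End.eigenspace Φ lam)
    -- `P` is the orthogonal projection onto `Atr` w.r.t. the Hilbert–Schmidt inner product
    (hP1 : ∀ ρ, P ρ ∈ Atr)
    (hP2 : ∀ ρ, ∀ Y ∈ Atr, (Yᴴ * (ρ - P ρ)).trace = 0)
    (ρ : Matrix (Fin d) (Fin d) ℂ) :
    Filter.Tendsto (fun n => hsNorm ((Φ ^ n) ρ - ((Φ ∘ₗ P) ^ n) ρ))
      Filter.atTop (nhds 0) := by
  set e := hsEquiv d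
  have hT : ∀ x, ‖e.conj Φ x‖ ≤ ‖x‖ := fun x ↦ by
    have := norm_hsEquiv_sum_unitary_conj_le hU (fun i ↦ (hp i).le) hpsum (e.symm x)
    rwa [← hΦ, e.apply_symm_apply] at this
  have hK : attractorSpace (e.conj Φ) = Atr.map (e : _ →ₗ[ℂ] _) := by
    rw [attractorSpace_conj, hAtr]
    rfl
  have hP₁ : ∀ x, e.conj P x ∈ attractorSpace (e.conj Φ) := fun x ↦ by
    rw [hK, LinearEquiv.conj_apply_apply]
    exact Submodule.mem_map_of_mem (hP1 _)
  have hP₂ : ∀ x, x - e.conj P x ∈ (attractorSpace (e.conj Φ))ᗮ := by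
    intro x
    obtain ⟨σ, rfl⟩ := e.surjective x
    rw [hK, Submodule.mem_orthogonal]
    rintro _ ⟨Y, hY, rfl⟩
    rw [LinearEquiv.conj_apply_apply, e.symm_apply_apply, ← map_sub]
    exact (inner_hsEquiv _ _).trans (hP2 σ Y hY)
  have := (tendsto_pow_sub_pow_comp_apply hT hP₁ hP₂ (e ρ)).norm
  simpa [hsNorm_eq_norm_hsEquiv, ← LinearEquiv.conj_comp, ← LinearEquiv.conj_pow] using this

theorem stmt_8 {d m : ℕ} (hd : 1 ≤ d)
    (U : Fin m → Matrix (Fin d) (Fin d) ℂ)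
    (hU : ∀ i, U i ∈ Matrix.unitaryGroup (Fin d) ℂ)
    (p : Fin m → ℝ) (hp : ∀ i, 0 < p i) (hpsum : ∑ i, p i = 1)
    (Φ P : Module.End ℂ (Matrix (Fin d) (Fin d) ℂ))
    (hΦ : ∀ ρ, Φ ρ = ∑ i, (p i : ℂ) • (U i * ρ * (U i)ᴴ))
    -- the attractor space: the (internal direct) sum of all eigenspaces of `Φ`
    -- corresponding to eigenvalues of unit modulus
    (Atr : Submodule ℂ (Matrix (Fin d) (Fin d) ℂ))
    (hAtr : Atr = ⨆ lam ∈ {l : ℂ | ‖l‖ = 1}, Module.End.eigenspace Φ lam)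
    -- `P` is the orthogonal projection onto `Atr` w.r.t. the Hilbert–Schmidt inner product
    (hP1 : ∀ ρ, P ρ ∈ Atr)
    (hP2 : ∀ ρ, ∀ Y ∈ Atr, (Yᴴ * (ρ - P ρ)).trace = 0)
    (ρ : Matrix (Fin d) (Fin d) ℂ) :
    Filter.Tendsto (fun n => hsNorm ((Φ ^ n) ρ - ((Φ ∘ₗ P) ^ n) ρ))
      Filter.atTop (nhds 0) :=
  stmt_8_general U hU p hp hpsum Φ P hΦ Atr hAtr hP1 hP2 ρ
end

section
/- Products of attractors: if |λ₁| = |λ₂| = 1 and X₁, X₂ are d×d complex matrices with Φ(X₁) = λ₁·X₁ and Φ(X₂) = λ₂·X₂, then the matrix product X₁·X₂ satisfies Φ(X₁·X₂) = (λ₁·λ₂)·(X₁·X₂); in particular X₁·X₂ is either zero or an eigenvector of Φ for the eigenvalue λ₁λ₂. -/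
open Matrix

/-!
Measure `Φ(X) = λX` in the Hilbert–Schmidt norm, for which conjugation by a unitary is an
isometry: `λX` is then a convex combination of the points `U_i X U_i†`, none longer than
`λX` itself, so by strict convexity of the norm all of them equal `λX`. Conjugation by `U_i`
being multiplicative, `U_i X₁ X₂ U_i† = λ₁ λ₂ X₁ X₂` for every `i`, and averaging gives the claim.
-/

section StrictConvexity

variable {ι V : Type*} [NormedAddCommGroup V] [NormedSpace ℝ V] [StrictConvexSpace ℝ V]

theorem eq_sum_smul_of_norm_le_norm_sum_smul {t : Finset ι} {w : ι → ℝ} {z : ι → V}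
    (hw : ∀ i ∈ t, 0 < w i) (hw₁ : ∑ i ∈ t, w i = 1)
    (hz : ∀ i ∈ t, ‖z i‖ ≤ ‖∑ i ∈ t, w i • z i‖) :
    ∀ i ∈ t, z i = ∑ j ∈ t, w j • z j := by
  have hconst : ∀ i ∈ t, ∀ j ∈ t, z i = z j := by
    by_contra! ⟨i, hi, j, hj, hij⟩
    exact lt_irrefl _ <| norm_sum_lt_of_strictConvexSpace (fun k hk ↦ (hw k hk).le) hw₁ hi hj
      hij (hw i hi).ne' (hw j hj).ne' hz
  intro i hi
  calc z i = ∑ j ∈ t, w j • z i := by rw [← Finset.sum_smul, hw₁, one_smul]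
    _ = ∑ j ∈ t, w j • z j := Finset.sum_congr rfl fun j hj ↦ by rw [hconst i hi j hj]

end StrictConvexity

theorem eq_smul_of_sum_smul_eq_smul {ι E : Type*} [NormedAddCommGroup E] [InnerProductSpace ℂ E]
    {t : Finset ι} {w : ι → ℝ} {y : ι → E} {x : E} {c : ℂ}
    (hw : ∀ i ∈ t, 0 < w i) (hw₁ : ∑ i ∈ t, w i = 1) (hc : ‖c‖ = 1)
    (hy : ∀ i ∈ t, ‖y i‖ ≤ ‖x‖) (h : ∑ i ∈ t, (w i : ℂ) • y i = c • x) :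
    ∀ i ∈ t, y i = c • x := by
  let := InnerProductSpace.complexToReal (G := E)
  simp only [Complex.coe_smul] at h
  rw [← h]
  refine eq_sum_smul_of_norm_le_norm_sum_smul hw hw₁ fun i hi ↦ ?_
  rw [h, norm_smul, hc, one_mul]
  exact hy i hi

namespace Matrix

variable {n : Type*} [Fintype n] [DecidableEq n]

theorem trace_unitary_conj {R : Type*} [CommRing R] [StarRing R] {U : Matrix n n R}
    (hU : U ∈ unitaryGroup n R) (A : Matrix n n R) : trace (U * A * Uᴴ) = trace A := by
  rw [trace_mul_cycle, ← star_eq_conjTranspose, Unitary.star_mul_self_of_mem hU, one_mul]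

open scoped ComplexOrder in
theorem unitary_conj_eq_smul_of_sum_eq_smul {ι : Type*} [Fintype ι]
    {U : ι → Matrix n n ℂ} (hU : ∀ i, U i ∈ unitaryGroup n ℂ)
    {p : ι → ℝ} (hp : ∀ i, 0 < p i) (hp₁ : ∑ i, p i = 1)
    {c : ℂ} (hc : ‖c‖ = 1) {X : Matrix n n ℂ}
    (h : ∑ i, (p i : ℂ) • (U i * X * (U i)ᴴ) = c • X) :
    ∀ i, U i * X * (U i)ᴴ = c • X := by
  -- the Hilbert–Schmidt norm, `‖A‖ ^ 2 = re (trace (A * 1 * Aᴴ))`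
  let : NormedAddCommGroup (Matrix n n ℂ) := toMatrixNormedAddCommGroup 1 PosDef.one
  let : InnerProductSpace ℂ (Matrix n n ℂ) := toMatrixInnerProductSpace 1 PosSemidef.one
  have hnorm : ∀ i, ‖U i * X * (U i)ᴴ‖ = ‖X‖ := fun i ↦ by
    have hconj :
        (U i * X * (U i)ᴴ) * 1 * (U i * X * (U i)ᴴ)ᴴ = U i * (X * 1 * Xᴴ) * (U i)ᴴ := by
      simp only [mul_one, conjTranspose_mul, conjTranspose_conjTranspose, Matrix.mul_assoc]
      rw [← Matrix.mul_assoc (U i)ᴴ, ← star_eq_conjTranspose, Unitary.star_mul_self_of_mem (hU i),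
        Matrix.one_mul]
    rw [@norm_eq_sqrt_re_inner ℂ, @norm_eq_sqrt_re_inner ℂ]
    change √(RCLike.re (trace ((U i * X * (U i)ᴴ) * 1 * (U i * X * (U i)ᴴ)ᴴ))) =
      √(RCLike.re (trace (X * 1 * Xᴴ)))
    rw [hconj, trace_unitary_conj (hU i)]
  intro i
  exact eq_smul_of_sum_smul_eq_smul (fun i _ ↦ hp i) hp₁ hc (fun i _ ↦ (hnorm i).le) h i
    (Finset.mem_univ i)

end Matrix

theorem stmt_9_general {d m : ℕ}
    (U : Fin m → Matrix (Fin d) (Fin d) ℂ)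
    (hU : ∀ i, U i ∈ Matrix.unitaryGroup (Fin d) ℂ)
    (p : Fin m → ℝ) (hp : ∀ i, 0 < p i) (hpsum : ∑ i, p i = 1)
    (Φ : Matrix (Fin d) (Fin d) ℂ → Matrix (Fin d) (Fin d) ℂ)
    (hΦ : ∀ ρ, Φ ρ = ∑ i, (p i : ℂ) • (U i * ρ * (U i)ᴴ))
    (lam₁ lam₂ : ℂ) (hlam₁ : ‖lam₁‖ = 1) (hlam₂ : ‖lam₂‖ = 1)
    (X₁ X₂ : Matrix (Fin d) (Fin d) ℂ)
    (h₁ : Φ X₁ = lam₁ • X₁) (h₂ : Φ X₂ = lam₂ • X₂) :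
    Φ (X₁ * X₂) = (lam₁ * lam₂) • (X₁ * X₂) := by
  have hX₁ := unitary_conj_eq_smul_of_sum_eq_smul hU hp hpsum hlam₁ (hΦ X₁ ▸ h₁)
  have hX₂ := unitary_conj_eq_smul_of_sum_eq_smul hU hp hpsum hlam₂ (hΦ X₂ ▸ h₂)
  have hX₁₂ : ∀ i, U i * (X₁ * X₂) * (U i)ᴴ = (lam₁ * lam₂) • (X₁ * X₂) := fun i ↦ by
    rw [← smul_mul_smul_comm, ← hX₁ i, ← hX₂ i]
    exact map_mul (Unitary.conjStarAlgAut ℂ _ ⟨U i, hU i⟩) X₁ X₂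
  rw [hΦ]
  simp_rw [hX₁₂, ← Finset.sum_smul, ← Complex.ofReal_sum, hpsum, Complex.ofReal_one, one_smul]

theorem stmt_9 {d m : ℕ} (hd : 1 ≤ d)
    (U : Fin m → Matrix (Fin d) (Fin d) ℂ)
    (hU : ∀ i, U i ∈ Matrix.unitaryGroup (Fin d) ℂ)
    (p : Fin m → ℝ) (hp : ∀ i, 0 < p i) (hpsum : ∑ i, p i = 1)
    (Φ : Matrix (Fin d) (Fin d) ℂ → Matrix (Fin d) (Fin d) ℂ)
    (hΦ : ∀ ρ, Φ ρ = ∑ i, (p i : ℂ) • (U i * ρ * (U i)ᴴ))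
    (lam₁ lam₂ : ℂ) (hlam₁ : ‖lam₁‖ = 1) (hlam₂ : ‖lam₂‖ = 1)
    (X₁ X₂ : Matrix (Fin d) (Fin d) ℂ)
    (h₁ : Φ X₁ = lam₁ • X₁) (h₂ : Φ X₂ = lam₂ • X₂) :
    Φ (X₁ * X₂) = (lam₁ * lam₂) • (X₁ * X₂) :=
  stmt_9_general U hU p hp hpsum Φ hΦ lam₁ lam₂ hlam₁ hlam₂ X₁ X₂ h₁ h₂
end

section
/- If |λ| = 1 and X is a d×d complex matrix with Φ(X) = λ·X, then the Hilbert–Schmidt adjoint map Φ† applied to X gives Φ†(X) = conj(λ)·X; explicitly, Σ_{i=1}^m p_i · U_i† X U_i = conj(λ)·X. -/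
/-!
Write `A i = U i * X * (U i)ᴴ`. The hypothesis says that `lam • X` is the `p`-weighted average of
the `A i`, and all of them have the Hilbert–Schmidt norm of `lam • X`, because `‖lam‖ = 1` and
unitary conjugation preserves `trace (Mᴴ * M)`. The variance identity
`∑ p i ‖A i - lam • X‖² = ∑ p i ‖A i‖² - ‖lam • X‖² = 0` then forces `A i = lam • X` for every `i`;
conjugating back gives `(U i)ᴴ * X * U i = conj lam • X`, and averaging gives the claim.
-/

open Matrix

namespace Matrix

variable {ι m n R : Type*} [Fintype m]

theorem sum_smul_conjTranspose_sub_mul_sub [CommRing R] [StarRing R] {s : Finset ι}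
    {w : ι → R} (hw : ∀ i ∈ s, IsSelfAdjoint (w i)) (hw1 : ∑ i ∈ s, w i = 1)
    {A : ι → Matrix m n R} {B : Matrix m n R} (hB : ∑ i ∈ s, w i • A i = B) :
    ∑ i ∈ s, w i • ((A i - B)ᴴ * (A i - B)) = ∑ i ∈ s, w i • ((A i)ᴴ * A i) - Bᴴ * B := by
  have hBH : ∑ i ∈ s, w i • (A i)ᴴ = Bᴴ := by
    rw [← hB, conjTranspose_sum]
    exact Finset.sum_congr rfl fun i hi => by rw [conjTranspose_smul, (hw i hi).star_eq]
  calc ∑ i ∈ s, w i • ((A i - B)ᴴ * (A i - B))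
      = ∑ i ∈ s, w i • ((A i)ᴴ * A i) - (∑ i ∈ s, w i • (A i)ᴴ) * B
          - Bᴴ * ∑ i ∈ s, w i • A i + (∑ i ∈ s, w i) • (Bᴴ * B) := by
        simp only [conjTranspose_sub, Matrix.sub_mul, Matrix.mul_sub, smul_sub,
          Finset.sum_sub_distrib, Matrix.sum_mul, Matrix.mul_sum, Finset.sum_smul,
          Matrix.smul_mul, Matrix.mul_smul]
        abel
    _ = ∑ i ∈ s, w i • ((A i)ᴴ * A i) - Bᴴ * B := by
        rw [hBH, hB, hw1, one_smul]
        abel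

open scoped ComplexOrder in
theorem eq_of_sum_smul_eq_of_trace_conjTranspose_mul_self_eq [Fintype n] {𝕜 : Type*}
    [RCLike 𝕜] {s : Finset ι} {w : ι → 𝕜} (hw : ∀ i ∈ s, 0 < w i) (hw1 : ∑ i ∈ s, w i = 1)
    {A : ι → Matrix m n 𝕜} {B : Matrix m n 𝕜} (hB : ∑ i ∈ s, w i • A i = B)
    (htr : ∀ i ∈ s, ((A i)ᴴ * A i).trace = (Bᴴ * B).trace) :
    ∀ i ∈ s, A i = B := by
  have hvar : ∑ i ∈ s, w i * ((A i - B)ᴴ * (A i - B)).trace = 0 := by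
    have := congrArg trace
      (sum_smul_conjTranspose_sub_mul_sub (fun i hi => .of_nonneg (hw i hi).le) hw1 hB)
    simp only [trace_sub, trace_sum, trace_smul, smul_eq_mul] at this
    rw [this, Finset.sum_congr rfl fun i hi => by rw [htr i hi], ← Finset.sum_mul, hw1,
      one_mul, sub_self]
  have hnonneg : ∀ i ∈ s, 0 ≤ w i * ((A i - B)ᴴ * (A i - B)).trace := fun i hi =>
    mul_nonneg (hw i hi).le (posSemidef_conjTranspose_mul_self _).trace_nonneg
  intro i hi
  rw [← sub_eq_zero, ← trace_conjTranspose_mul_self_eq_zero_iff]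
  exact (mul_eq_zero.mp ((Finset.sum_eq_zero_iff_of_nonneg hnonneg).mp hvar i hi)).resolve_left
    (hw i hi).ne'

theorem trace_conjTranspose_mul_self_unitary_conj [Fintype n] [DecidableEq n] [CommRing R]
    [StarRing R] {U : Matrix n n R} (hU : U ∈ unitaryGroup n R) (X : Matrix n n R) :
    ((U * X * Uᴴ)ᴴ * (U * X * Uᴴ)).trace = (Xᴴ * X).trace := by
  have hUU : Uᴴ * U = 1 := Unitary.star_mul_self_of_mem hU
  calc ((U * X * Uᴴ)ᴴ * (U * X * Uᴴ)).trace = (U * Xᴴ * (Uᴴ * U) * X * Uᴴ).trace := by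
        simp only [conjTranspose_mul, conjTranspose_conjTranspose, Matrix.mul_assoc]
    _ = (Xᴴ * X).trace := by
        rw [hUU, Matrix.mul_one, Matrix.mul_assoc U, trace_mul_cycle, ← Matrix.mul_assoc, hUU,
          Matrix.one_mul]

theorem conjTranspose_mul_mul_eq_of_mul_mul_conjTranspose_eq [Fintype n] [DecidableEq n]
    [CommRing R] [StarRing R] {U : Matrix n n R} (hU : U ∈ unitaryGroup n R) {c : R}
    (hc : star c * c = 1) {X : Matrix n n R} (hX : U * X * Uᴴ = c • X) : Uᴴ * X * U = star c • X := by
  have hUU : Uᴴ * U = 1 := Unitary.star_mul_self_of_mem hU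
  calc Uᴴ * X * U = star c • (Uᴴ * (c • X) * U) := by
        rw [Matrix.mul_smul, Matrix.smul_mul, smul_smul, hc, one_smul]
    _ = star c • X := by
        rw [← hX, show Uᴴ * (U * X * Uᴴ) * U = Uᴴ * U * X * (Uᴴ * U) by
          simp only [Matrix.mul_assoc], hUU, Matrix.one_mul, Matrix.mul_one]

end Matrix

theorem stmt_11_general {d m : ℕ}
    (U : Fin m → Matrix (Fin d) (Fin d) ℂ)
    (hU : ∀ i, U i ∈ Matrix.unitaryGroup (Fin d) ℂ)
    (p : Fin m → ℝ) (hp : ∀ i, 0 < p i) (hpsum : ∑ i, p i = 1)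
    (Φ : Matrix (Fin d) (Fin d) ℂ → Matrix (Fin d) (Fin d) ℂ)
    (hΦ : ∀ ρ, Φ ρ = ∑ i, (p i : ℂ) • (U i * ρ * (U i)ᴴ))
    (lam : ℂ) (hlam : ‖lam‖ = 1)
    (X : Matrix (Fin d) (Fin d) ℂ) (hX : Φ X = lam • X) :
    ∑ i, (p i : ℂ) • ((U i)ᴴ * X * U i) = (starRingEnd ℂ) lam • X := by
  have hpC : ∑ i, (p i : ℂ) = 1 := by exact_mod_cast hpsum
  have hlam' : star lam * lam = 1 := by
    rw [← starRingEnd_apply, Complex.conj_mul', hlam]; norm_num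
  have hconj : ∀ i ∈ Finset.univ, U i * X * (U i)ᴴ = lam • X :=
    eq_of_sum_smul_eq_of_trace_conjTranspose_mul_self_eq
      (fun i _ => Complex.zero_lt_real.mpr (hp i)) hpC ((hΦ X).symm.trans hX) fun i _ => by
        rw [trace_conjTranspose_mul_self_unitary_conj (hU i), conjTranspose_smul,
          Matrix.smul_mul, Matrix.mul_smul, smul_smul, hlam', one_smul]
  calc ∑ i, (p i : ℂ) • ((U i)ᴴ * X * U i) = ∑ i, (p i : ℂ) • ((starRingEnd ℂ) lam • X) :=
        Finset.sum_congr rfl fun i hi => by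
          rw [conjTranspose_mul_mul_eq_of_mul_mul_conjTranspose_eq (hU i) hlam' (hconj i hi),
            starRingEnd_apply]
    _ = (starRingEnd ℂ) lam • X := by rw [← Finset.sum_smul, hpC, one_smul]

theorem stmt_11 {d m : ℕ} (hd : 1 ≤ d)
    (U : Fin m → Matrix (Fin d) (Fin d) ℂ)
    (hU : ∀ i, U i ∈ Matrix.unitaryGroup (Fin d) ℂ)
    (p : Fin m → ℝ) (hp : ∀ i, 0 < p i) (hpsum : ∑ i, p i = 1)
    (Φ : Matrix (Fin d) (Fin d) ℂ → Matrix (Fin d) (Fin d) ℂ)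
    (hΦ : ∀ ρ, Φ ρ = ∑ i, (p i : ℂ) • (U i * ρ * (U i)ᴴ))
    (lam : ℂ) (hlam : ‖lam‖ = 1)
    (X : Matrix (Fin d) (Fin d) ℂ) (hX : Φ X = lam • X) :
    ∑ i, (p i : ℂ) • ((U i)ᴴ * X * U i) = (starRingEnd ℂ) lam • X :=
  stmt_11_general U hU p hp hpsum Φ hΦ lam hlam X hX
end

section
/- Attractor eigenvectors evolve unitarily under each Kraus operator: if |λ| = 1 and X is a d×d complex matrix with Φ(X) = λ·X, then for every index j = 1, …, m one has U_j · X · U_j† = λ·X = Φ(X). -/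
open Matrix BigOperators

/-!
Conjugation by a unitary preserves the Hilbert–Schmidt norm, so `Φ X = λ • X` with `‖λ‖ = 1`
exhibits `λ • X` as a convex combination, with positive weights, of the matrices `U i * X * (U i)ᴴ`,
all of the same norm as `λ • X`. Since the Hilbert–Schmidt norm is strictly convex, all of them
must equal `λ • X`.
-/

theorem eq_sum_smul_of_norm_le_norm_sum {ι V : Type*} [Fintype ι] [NormedAddCommGroup V]
    [NormedSpace ℝ V] [StrictConvexSpace ℝ V] {w : ι → ℝ} (hw : ∀ i, 0 < w i)
    (hw₁ : ∑ i, w i = 1) {z : ι → V} (hz : ∀ i, ‖z i‖ ≤ ‖∑ i, w i • z i‖) (j : ι) :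
    z j = ∑ i, w i • z i := by
  by_cases hconst : ∃ i, z i ≠ z j
  · obtain ⟨i, hij⟩ := hconst
    exact absurd (norm_sum_lt_of_strictConvexSpace (fun k _ ↦ (hw k).le) hw₁
      (Finset.mem_univ i) (Finset.mem_univ j) hij (hw i).ne' (hw j).ne' fun k _ ↦ hz k)
      (lt_irrefl _)
  · simp only [not_exists, not_not] at hconst
    simp only [hconst, ← Finset.sum_smul, hw₁, one_smul]

namespace Matrix

variable {m n 𝕜 : Type*} [RCLike 𝕜]

noncomputable def toHilbertSchmidt : Matrix m n 𝕜 →ₗ[𝕜] EuclideanSpace 𝕜 (m × n) where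
  toFun A := WithLp.toLp 2 fun q ↦ A q.1 q.2
  map_add' _ _ := rfl
  map_smul' _ _ := rfl

theorem toHilbertSchmidt_injective :
    Function.Injective (toHilbertSchmidt : Matrix m n 𝕜 → EuclideanSpace 𝕜 (m × n)) :=
  fun _ _ h ↦ Matrix.ext fun i j ↦ congrArg (fun v : EuclideanSpace 𝕜 (m × n) ↦ v (i, j)) h

variable [Fintype m] [Fintype n]

theorem inner_toHilbertSchmidt (A B : Matrix m n 𝕜) :
    inner 𝕜 (toHilbertSchmidt A) (toHilbertSchmidt B) = trace (Aᴴ * B) := by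
  simp only [toHilbertSchmidt, PiLp.inner_apply, RCLike.inner_apply, trace, diag_apply, mul_apply,
    conjTranspose_apply, RCLike.star_def, mul_comm, ← Finset.sum_product', Finset.univ_product_univ]
  exact Fintype.sum_equiv (Equiv.prodComm _ _) _ _ fun _ ↦ rfl

theorem trace_conjTranspose_mul_unitary_conj [DecidableEq n] {U : Matrix n n 𝕜}
    (hU : U ∈ unitaryGroup n 𝕜) (A B : Matrix n n 𝕜) :
    trace ((U * A * Uᴴ)ᴴ * (U * B * Uᴴ)) = trace (Aᴴ * B) := by
  have hUU : Uᴴ * U = 1 := mem_unitaryGroup_iff'.mp hU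
  calc trace ((U * A * Uᴴ)ᴴ * (U * B * Uᴴ))
      = trace (U * (Aᴴ * (Uᴴ * U) * B) * Uᴴ) := by
        simp only [conjTranspose_mul, conjTranspose_conjTranspose, Matrix.mul_assoc]
    _ = trace (Aᴴ * B) := by
        rw [hUU, Matrix.mul_one, trace_mul_cycle, ← Matrix.mul_assoc, hUU, Matrix.one_mul]

theorem norm_toHilbertSchmidt_unitary_conj [DecidableEq n] {U : Matrix n n 𝕜}
    (hU : U ∈ unitaryGroup n 𝕜) (A : Matrix n n 𝕜) :
    ‖toHilbertSchmidt (U * A * Uᴴ)‖ = ‖toHilbertSchmidt A‖ := by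
  rw [norm_eq_sqrt_re_inner (𝕜 := 𝕜), norm_eq_sqrt_re_inner (𝕜 := 𝕜), inner_toHilbertSchmidt,
    inner_toHilbertSchmidt, trace_conjTranspose_mul_unitary_conj hU]

end Matrix

theorem stmt_12_general {d m : ℕ}
    (U : Fin m → Matrix (Fin d) (Fin d) ℂ)
    (hU : ∀ i, U i ∈ Matrix.unitaryGroup (Fin d) ℂ)
    (p : Fin m → ℝ) (hp : ∀ i, 0 < p i) (hpsum : ∑ i, p i = 1)
    (Φ : Matrix (Fin d) (Fin d) ℂ → Matrix (Fin d) (Fin d) ℂ)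
    (hΦ : ∀ ρ, Φ ρ = ∑ i, (p i : ℂ) • (U i * ρ * (U i)ᴴ))
    (lam : ℂ) (hlam : ‖lam‖ = 1)
    (X : Matrix (Fin d) (Fin d) ℂ) (hX : Φ X = lam • X)
    (j : Fin m) :
    U j * X * (U j)ᴴ = lam • X ∧ U j * X * (U j)ᴴ = Φ X := by
  set z : Fin m → EuclideanSpace ℂ (Fin d × Fin d) := fun i ↦ toHilbertSchmidt (U i * X * (U i)ᴴ)
  have hsum : ∑ i, p i • z i = toHilbertSchmidt (lam • X) := by
    rw [← hX, hΦ, map_sum]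
    simp only [z, Complex.coe_smul, LinearMap.map_smul_of_tower]
  have hnorm : ∀ i, ‖z i‖ ≤ ‖∑ i, p i • z i‖ := fun i ↦ by
    rw [hsum, map_smul, norm_smul, hlam, one_mul, norm_toHilbertSchmidt_unitary_conj (hU i)]
  have hj : U j * X * (U j)ᴴ = lam • X :=
    toHilbertSchmidt_injective ((eq_sum_smul_of_norm_le_norm_sum hp hpsum hnorm j).trans hsum)
  exact ⟨hj, hj.trans hX.symm⟩

theorem stmt_12 {d m : ℕ} (hd : 1 ≤ d)
    (U : Fin m → Matrix (Fin d) (Fin d) ℂ)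
    (hU : ∀ i, U i ∈ Matrix.unitaryGroup (Fin d) ℂ)
    (p : Fin m → ℝ) (hp : ∀ i, 0 < p i) (hpsum : ∑ i, p i = 1)
    (Φ : Matrix (Fin d) (Fin d) ℂ → Matrix (Fin d) (Fin d) ℂ)
    (hΦ : ∀ ρ, Φ ρ = ∑ i, (p i : ℂ) • (U i * ρ * (U i)ᴴ))
    (lam : ℂ) (hlam : ‖lam‖ = 1)
    (X : Matrix (Fin d) (Fin d) ℂ) (hX : Φ X = lam • X)
    (j : Fin m) :
    U j * X * (U j)ᴴ = lam • X ∧ U j * X * (U j)ᴴ = Φ X :=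
  stmt_12_general U hU p hp hpsum Φ hΦ lam hlam X hX j
end

section
/- If one of the unitary operators in the decomposition of Φ is the identity (i.e. U_{i₀} = I for some i₀), then the only eigenvalue λ of Φ with |λ| = 1 is λ = 1: if X ≠ 0 satisfies Φ(X) = λ·X with |λ| = 1, then λ = 1. -/
open Matrix

/-! The conjugations `ρ ↦ U ρ Uᴴ` are isometries for the Hilbert–Schmidt norm, so `Φ X = λ X` with
`|λ| = 1` writes a vector of norm `‖X‖` as a convex combination of vectors of norm `‖X‖`. In a
Hilbert space this forces every vector of positive weight to equal the combination, so
`U i X (U i)ᴴ = λ X` for every `i`; the term with `U i₀ = 1` then gives `X = λ X`. -/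

theorem eq_of_sum_smul_eq_of_norm_le_s14 {𝕜 E ι : Type*} [RCLike 𝕜] [NormedAddCommGroup E]
    [InnerProductSpace 𝕜 E] [Fintype ι] {w : ι → ℝ} {x : ι → E} {v : E}
    (hw : ∀ i, 0 ≤ w i) (hw1 : ∑ i, w i = 1) (hx : ∀ i, ‖x i‖ ≤ ‖v‖)
    (hv : ∑ i, (w i : 𝕜) • x i = v) {i : ι} (hi : 0 < w i) : x i = v := by
  have hre : ∑ j, w j * RCLike.re (inner 𝕜 v (x j)) = ‖v‖ ^ 2 := by
    have := congrArg RCLike.re (congrArg (inner 𝕜 v) hv)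
    simpa only [inner_sum, inner_smul_right, map_sum, RCLike.re_ofReal_mul,
      inner_self_eq_norm_sq (𝕜 := 𝕜)] using this
  have hdist : ∑ j, w j * ‖v - x j‖ ^ 2 = 0 := by
    refine le_antisymm ?_ (Finset.sum_nonneg fun j _ => mul_nonneg (hw j) (sq_nonneg _))
    calc ∑ j, w j * ‖v - x j‖ ^ 2
        = ∑ j, w j * (‖v‖ ^ 2 + ‖x j‖ ^ 2) - 2 * ∑ j, w j * RCLike.re (inner 𝕜 v (x j)) := by
          simp only [@norm_sub_sq 𝕜, Finset.mul_sum, ← Finset.sum_sub_distrib]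
          exact Finset.sum_congr rfl fun j _ => by ring
      _ ≤ ∑ j, w j * (‖v‖ ^ 2 + ‖v‖ ^ 2) - 2 * ‖v‖ ^ 2 := by
          rw [hre]
          gcongr with j
          · exact hw j
          · exact hx j
      _ = 0 := by rw [← Finset.sum_mul, hw1]; ring
  have := (Finset.sum_eq_zero_iff_of_nonneg fun j _ => mul_nonneg (hw j) (sq_nonneg _)).mp
    hdist i (Finset.mem_univ i)
  simpa [hi.ne', sub_eq_zero, eq_comm] using this

namespace Matrix

variable {m n 𝕜 : Type*} [RCLike 𝕜]

noncomputable def toEuclideanSpace : Matrix m n 𝕜 →ₗ[𝕜] EuclideanSpace 𝕜 (m × n) where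
  toFun A := WithLp.toLp 2 fun q => A q.1 q.2
  map_add' _ _ := rfl
  map_smul' _ _ := rfl

theorem toEuclideanSpace_injective :
    Function.Injective (toEuclideanSpace : Matrix m n 𝕜 →ₗ[𝕜] EuclideanSpace 𝕜 (m × n)) :=
  fun _ _ h => ext fun i j => congrArg (fun v : EuclideanSpace 𝕜 (m × n) => v (i, j)) h

theorem inner_toEuclideanSpace [Fintype m] [Fintype n] (A B : Matrix m n 𝕜) :
    inner 𝕜 (toEuclideanSpace A) (toEuclideanSpace B) = (Aᴴ * B).trace := by
  simp only [toEuclideanSpace, PiLp.inner_apply, RCLike.inner_apply, trace, diag, mul_apply,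
    conjTranspose_apply, Fintype.sum_prod_type]
  rw [Finset.sum_comm]
  exact Finset.sum_congr rfl fun _ _ => Finset.sum_congr rfl fun _ _ => mul_comm _ _

theorem norm_toEuclideanSpace_unitary_conj [Fintype n] [DecidableEq n] {U : Matrix n n 𝕜}
    (hU : U ∈ unitaryGroup n 𝕜) (X : Matrix n n 𝕜) :
    ‖toEuclideanSpace (U * X * Uᴴ)‖ = ‖toEuclideanSpace X‖ := by
  have hUU : Uᴴ * U = 1 := mem_unitaryGroup_iff'.mp hU
  have hsq : (‖toEuclideanSpace (U * X * Uᴴ)‖ : 𝕜) ^ 2 = (‖toEuclideanSpace X‖ : 𝕜) ^ 2 := by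
    rw [← inner_self_eq_norm_sq_to_K, ← inner_self_eq_norm_sq_to_K, inner_toEuclideanSpace,
      inner_toEuclideanSpace, conjTranspose_mul, conjTranspose_mul, conjTranspose_conjTranspose]
    calc (U * (Xᴴ * Uᴴ) * (U * X * Uᴴ)).trace = (U * (Xᴴ * (Uᴴ * U) * X) * Uᴴ).trace := by
          simp only [Matrix.mul_assoc]
      _ = (Xᴴ * X).trace := by rw [hUU, Matrix.mul_one, trace_mul_cycle, ← Matrix.mul_assoc,
          hUU, Matrix.one_mul]
  exact_mod_cast (sq_eq_sq₀ (norm_nonneg _) (norm_nonneg _)).mp (by exact_mod_cast hsq)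

theorem mul_mul_conjTranspose_eq_smul_of_sum_eq {ι : Type*} [Fintype ι] [Fintype n]
    [DecidableEq n] {U : ι → Matrix n n 𝕜} (hU : ∀ i, U i ∈ unitaryGroup n 𝕜) {p : ι → ℝ}
    (hp : ∀ i, 0 ≤ p i) (hpsum : ∑ i, p i = 1) {lam : 𝕜} (hlam : ‖lam‖ = 1) {X : Matrix n n 𝕜}
    (heig : ∑ i, (p i : 𝕜) • (U i * X * (U i)ᴴ) = lam • X) {i : ι} (hi : 0 < p i) :
    U i * X * (U i)ᴴ = lam • X := by
  refine toEuclideanSpace_injective <| eq_of_sum_smul_eq_of_norm_le_s14 (𝕜 := 𝕜)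
    (x := fun j => toEuclideanSpace (U j * X * (U j)ᴴ)) hp hpsum (fun j => ?_) ?_ hi
  · rw [map_smul, norm_smul, hlam, one_mul, norm_toEuclideanSpace_unitary_conj (hU j)]
  · simp only [← map_smul, ← map_sum, heig]

end Matrix

theorem stmt_14_general {d m : ℕ}
    (U : Fin m → Matrix (Fin d) (Fin d) ℂ)
    (hU : ∀ i, U i ∈ Matrix.unitaryGroup (Fin d) ℂ)
    (hid : ∃ i₀, U i₀ = 1)
    (p : Fin m → ℝ) (hp : ∀ i, 0 < p i) (hpsum : ∑ i, p i = 1)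
    (Φ : Matrix (Fin d) (Fin d) ℂ → Matrix (Fin d) (Fin d) ℂ)
    (hΦ : ∀ ρ, Φ ρ = ∑ i, (p i : ℂ) • (U i * ρ * (U i)ᴴ))
    (lam : ℂ) (hlam : ‖lam‖ = 1)
    (X : Matrix (Fin d) (Fin d) ℂ) (hX : X ≠ 0)
    (heig : Φ X = lam • X) :
    lam = 1 := by
  obtain ⟨i₀, hi₀⟩ := hid
  have hfixed := mul_mul_conjTranspose_eq_smul_of_sum_eq hU (fun i => (hp i).le) hpsum hlam
    ((hΦ X).symm.trans heig) (hp i₀)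
  rw [hi₀, Matrix.one_mul, conjTranspose_one, Matrix.mul_one] at hfixed
  exact smul_left_injective ℂ hX (hfixed.symm.trans (one_smul ℂ X).symm)

theorem stmt_14 {d m : ℕ} (hd : 1 ≤ d)
    (U : Fin m → Matrix (Fin d) (Fin d) ℂ)
    (hU : ∀ i, U i ∈ Matrix.unitaryGroup (Fin d) ℂ)
    (hid : ∃ i₀, U i₀ = 1)
    (p : Fin m → ℝ) (hp : ∀ i, 0 < p i) (hpsum : ∑ i, p i = 1)
    (Φ : Matrix (Fin d) (Fin d) ℂ → Matrix (Fin d) (Fin d) ℂ)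
    (hΦ : ∀ ρ, Φ ρ = ∑ i, (p i : ℂ) • (U i * ρ * (U i)ᴴ))
    (lam : ℂ) (hlam : ‖lam‖ = 1)
    (X : Matrix (Fin d) (Fin d) ℂ) (hX : X ≠ 0)
    (heig : Φ X = lam • X) :
    lam = 1 :=
  stmt_14_general U hU hid p hp hpsum Φ hΦ lam hlam X hX heig
end

section
/- For the two-qubit CNOT random unitary operation Φ(ρ) = p·C₁ρC₁ + (1−p)·C₂ρC₂ with 0 < p < 1, the eigenspace of Φ for the eigenvalue 1 has complex dimension 5, and the eigenspace for the eigenvalue −1 has complex dimension 1. -/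
open Matrix BigOperators

/-!
Conjugation by a permutation matrix is an isometry for the Frobenius norm, which is strictly
convex. So if `p • C₁ρC₁ + (1 - p) • C₂ρC₂ = μ • ρ` with `‖μ‖ = 1`, both terms already equal
`μ • ρ`: the eigenspaces of `Φ` for `±1` consist of the matrices fixed (resp. negated) by
conjugation with the transpositions `(2 3)` and `(1 3)` of the basis. These generate the
permutations of `{1, 2, 3}`, which act diagonally on index pairs with five orbits, giving
dimension 5; only the free orbit, the off-diagonal pairs inside `{1, 2, 3}`, carries the sign
character, giving dimension 1.
-/

section StrictConvexSpace

variable {E : Type*}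

theorem eq_and_eq_of_combo_eq_of_norm_eq [NormedAddCommGroup E] [NormedSpace ℝ E]
    [StrictConvexSpace ℝ E] {x y z : E} {a b : ℝ} (ha : 0 < a) (hb : 0 < b) (hab : a + b = 1)
    (hx : ‖x‖ = ‖z‖) (hy : ‖y‖ = ‖z‖) (h : a • x + b • y = z) : x = z ∧ y = z := by
  obtain rfl : x = y := by
    by_contra hne
    have := combo_mem_ball_of_ne (z := 0) (r := ‖z‖) (by simp [hx]) (by simp [hy]) hne ha hb hab
    simp [h] at this
  rw [← add_smul, hab, one_smul] at h
  exact ⟨h, h⟩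

theorem eigenspace_eq_inf_of_norm_eq [NormedAddCommGroup E] [NormedSpace ℂ E]
    [StrictConvexSpace ℝ E] {Φ A B : Module.End ℂ E} (hA : ∀ x, ‖A x‖ = ‖x‖)
    (hB : ∀ x, ‖B x‖ = ‖x‖) {p : ℝ} (hp0 : 0 < p) (hp1 : p < 1)
    (hΦ : ∀ x, Φ x = (p : ℂ) • A x + ((1 - p : ℝ) : ℂ) • B x) {μ : ℂ} (hμ : ‖μ‖ = 1) :
    Module.End.eigenspace Φ μ = Module.End.eigenspace A μ ⊓ Module.End.eigenspace B μ := by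
  ext x
  simp only [Submodule.mem_inf, Module.End.mem_eigenspace_iff, hΦ]
  constructor
  · intro h
    rw [Complex.coe_smul, Complex.coe_smul] at h
    exact eq_and_eq_of_combo_eq_of_norm_eq hp0 (sub_pos.2 hp1) (add_sub_cancel p 1)
      (by rw [hA, norm_smul, hμ, one_mul]) (by rw [hB, norm_smul, hμ, one_mul]) h
  · rintro ⟨hAx, hBx⟩
    rw [hAx, hBx, ← add_smul, ← Complex.ofReal_add, add_sub_cancel, Complex.ofReal_one, one_smul]

end StrictConvexSpace

namespace Matrix

section frobenius

attribute [local instance] frobeniusNormedAddCommGroup frobeniusNormedSpace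

theorem frobenius_norm_submatrix {l m n o α : Type*} [Fintype l] [Fintype m] [Fintype n]
    [Fintype o] [NormedAddCommGroup α] (M : Matrix m o α) (e : l ≃ m) (f : n ≃ o) :
    ‖M.submatrix e f‖ = ‖M‖ := by
  rw [frobenius_norm_def, frobenius_norm_def]
  congr 1
  exact Fintype.sum_equiv e _ _ fun i => Fintype.sum_equiv f _ _ fun j => rfl

theorem frobenius_strictConvexSpace {m n : Type*} [Fintype m] [Fintype n] :
    StrictConvexSpace ℝ (Matrix m n ℂ) :=
  -- the Frobenius norm is defined as the norm of this nested `L²` space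
  LinearIsometry.strictConvexSpace (F := WithLp 2 (m → WithLp 2 (n → ℂ)))
    { toFun := fun A => WithLp.toLp 2 fun i => WithLp.toLp 2 (A i)
      map_add' := fun _ _ => rfl
      map_smul' := fun _ _ => rfl
      norm_map' := fun _ => rfl }

end frobenius

variable {n : Type*} [DecidableEq n] (R : Type*) [Semiring R]

def conjSwap (i j : n) : Module.End R (Matrix n n R) :=
  (reindexLinearEquiv R R (Equiv.swap i j) (Equiv.swap i j)).toLinearMap

variable {R}

theorem conjSwap_apply_apply (i j : n) (M : Matrix n n R) (a b : n) :
    conjSwap R i j M a b = M (Equiv.swap i j a) (Equiv.swap i j b) := rfl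

theorem conjSwap_apply [Fintype n] (i j : n) (M : Matrix n n R) :
    conjSwap R i j M = swap R i j * M * swap R i j := by
  simp only [swap, Equiv.Perm.permMatrix, PEquiv.toMatrix_toPEquiv_mul,
    PEquiv.mul_toMatrix_toPEquiv, submatrix_submatrix, Equiv.symm_swap]
  rfl

section frobenius

attribute [local instance] frobeniusNormedAddCommGroup frobeniusNormedSpace
  frobenius_strictConvexSpace

theorem eigenspace_eq_inf_conjSwap [Fintype n] {Φ : Module.End ℂ (Matrix n n ℂ)} {i j k l : n}
    {p : ℝ} (hp0 : 0 < p) (hp1 : p < 1)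
    (hΦ : ∀ ρ, Φ ρ = (p : ℂ) • conjSwap ℂ i j ρ + ((1 - p : ℝ) : ℂ) • conjSwap ℂ k l ρ)
    {μ : ℂ} (hμ : ‖μ‖ = 1) :
    Module.End.eigenspace Φ μ =
      Module.End.eigenspace (conjSwap ℂ i j) μ ⊓ Module.End.eigenspace (conjSwap ℂ k l) μ :=
  eigenspace_eq_inf_of_norm_eq (fun _ => frobenius_norm_submatrix _ _ _)
    (fun _ => frobenius_norm_submatrix _ _ _) hp0 hp1 hΦ hμ

end frobenius

end Matrix

/-- Labels the five orbits of the permutations of `{1, 2, 3} ⊆ Fin 4` acting diagonally on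
index pairs. -/
def orbitIndex (i j : Fin 4) : Fin 5 :=
  if i = 0 then if j = 0 then 0 else 1 else if j = 0 then 2 else if i = j then 3 else 4

def orbitMatrix : (Fin 5 → ℂ) →ₗ[ℂ] Matrix (Fin 4) (Fin 4) ℂ where
  toFun g := of fun i j => g (orbitIndex i j)
  map_add' _ _ := rfl
  map_smul' _ _ := rfl

theorem orbitMatrix_injective : Function.Injective orbitMatrix := by
  intro g g' h
  funext k
  fin_cases k
  exacts [congr_fun₂ h 0 0, congr_fun₂ h 0 1, congr_fun₂ h 1 0, congr_fun₂ h 1 1,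
    congr_fun₂ h 1 2]

theorem eigenspace_one_inf_conjSwap :
    Module.End.eigenspace (conjSwap ℂ (2 : Fin 4) 3) 1 ⊓
      Module.End.eigenspace (conjSwap ℂ 1 3) 1 = LinearMap.range orbitMatrix := by
  ext ρ
  simp only [Submodule.mem_inf, Module.End.mem_eigenspace_iff, one_smul, LinearMap.mem_range]
  constructor
  · rintro ⟨h₁, h₂⟩
    refine ⟨![ρ 0 0, ρ 0 1, ρ 1 0, ρ 1 1, ρ 1 2], ?_⟩
    rw [← Matrix.ext_iff] at h₁ h₂
    simp only [Fin.isValue, conjSwap_apply_apply, Equiv.swap_apply_def, Fin.forall_fin_succ,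
      Fin.reduceEq, ↓reduceIte, Fin.succ_zero_eq_one, Fin.succ_one_eq_two, Fin.reduceSucc,
      IsEmpty.forall_iff, and_true, true_and, zero_ne_one] at h₁ h₂
    ext i j
    fin_cases i <;> fin_cases j <;> simp [orbitMatrix, orbitIndex] <;> grind
  · rintro ⟨g, rfl⟩
    constructor <;> ext i j <;> fin_cases i <;> fin_cases j <;> rfl

/-- The entry at `(i, j)` is the sign of the permutation of `{1, 2, 3}` taking `(1, 2)` to
`(i, j)`. -/
def signOrbitMatrix : Matrix (Fin 4) (Fin 4) ℂ :=
  !![0, 0, 0, 0; 0, 0, 1, -1; 0, -1, 0, 1; 0, 1, -1, 0]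

theorem eigenspace_neg_one_inf_conjSwap :
    Module.End.eigenspace (conjSwap ℂ (2 : Fin 4) 3) (-1) ⊓
      Module.End.eigenspace (conjSwap ℂ 1 3) (-1) = Submodule.span ℂ {signOrbitMatrix} := by
  apply le_antisymm
  · rintro ρ ⟨h₁, h₂⟩
    rw [SetLike.mem_coe, Module.End.mem_eigenspace_iff, ← Matrix.ext_iff] at h₁ h₂
    simp only [Fin.isValue, conjSwap_apply_apply, Equiv.swap_apply_def, Matrix.smul_apply,
      smul_eq_mul, neg_mul, one_mul, Fin.forall_fin_succ, Fin.reduceEq, ↓reduceIte,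
      Fin.succ_zero_eq_one, Fin.succ_one_eq_two, Fin.reduceSucc, IsEmpty.forall_iff, and_true,
      zero_ne_one] at h₁ h₂
    refine Submodule.mem_span_singleton.2 ⟨ρ 1 2, ?_⟩
    ext i j
    fin_cases i <;> fin_cases j <;> simp [signOrbitMatrix] <;> grind
  · rw [Submodule.span_singleton_le_iff_mem, Submodule.mem_inf, Module.End.mem_eigenspace_iff,
      Module.End.mem_eigenspace_iff]
    constructor <;> ext i j <;> fin_cases i <;> fin_cases j <;>
      simp [signOrbitMatrix, conjSwap_apply_apply, Equiv.swap_apply_def]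

theorem signOrbitMatrix_ne_zero : signOrbitMatrix ≠ 0 := fun h => by
  simpa [signOrbitMatrix] using congr_fun₂ h 1 2

theorem stmt_19 (p : ℝ) (hp0 : 0 < p) (hp1 : p < 1)
    (C₁ C₂ : Matrix (Fin 4) (Fin 4) ℂ)
    -- C₁ : |i,j⟩ ↦ |i, i⊕j⟩ swaps |10⟩ and |11⟩ (basis order |00⟩,|01⟩,|10⟩,|11⟩)
    (hC₁ : C₁ = !![1,0,0,0; 0,1,0,0; 0,0,0,1; 0,0,1,0])
    -- C₂ : |i,j⟩ ↦ |i⊕j, j⟩ swaps |01⟩ and |11⟩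
    (hC₂ : C₂ = !![1,0,0,0; 0,0,0,1; 0,0,1,0; 0,1,0,0])
    (Φ : Module.End ℂ (Matrix (Fin 4) (Fin 4) ℂ))
    (hΦ : ∀ ρ, Φ ρ = (p : ℂ) • (C₁ * ρ * C₁) + ((1 - p : ℝ) : ℂ) • (C₂ * ρ * C₂)) :
    Module.finrank ℂ (Module.End.eigenspace Φ 1) = 5 ∧
      Module.finrank ℂ (Module.End.eigenspace Φ (-1)) = 1 := by
  have hC₁' : C₁ = swap ℂ 2 3 := hC₁.trans (by ext i j; fin_cases i <;> fin_cases j <;> rfl)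
  have hC₂' : C₂ = swap ℂ 1 3 := hC₂.trans (by ext i j; fin_cases i <;> fin_cases j <;> rfl)
  have hΦ' : ∀ ρ, Φ ρ = (p : ℂ) • conjSwap ℂ 2 3 ρ + ((1 - p : ℝ) : ℂ) • conjSwap ℂ 1 3 ρ := by
    simpa only [conjSwap_apply, ← hC₁', ← hC₂'] using hΦ
  constructor
  · rw [eigenspace_eq_inf_conjSwap hp0 hp1 hΦ' norm_one, eigenspace_one_inf_conjSwap,
      LinearMap.finrank_range_of_inj orbitMatrix_injective, Module.finrank_fin_fun]
  · rw [eigenspace_eq_inf_conjSwap hp0 hp1 hΦ' (by simp), eigenspace_neg_one_inf_conjSwap,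
      finrank_span_singleton signOrbitMatrix_ne_zero]
end
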